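/- arXiv:1207.1964 — 7 statements merged into one kernel-verified Lean document; each statement's English description precedes it below -/
import Mathlib

section
/- (Corollary 2.11, cocycle part) If C is a 2-cocycle of 𝔤, then the alternating trilinear map Sq(C) defined by Sq(C)(X,Y,Z) = C(C(X,Y),Z) + C(C(Y,Z),X) + C(C(Z,X),Y) is a 3-cocycle of 𝔤. -/
variable {V : Type*} [LieRing V]

/-- The Chevalley–Eilenberg differential with coefficients in the adjoint representation,
defined on raw `r`-cochains `(Fin r → V) → V` (0-based indices). -/
def ceDiff : ∀ (r : ℕ), ((Fin r → V) → V) → (Fin (r + 1) → V) → V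
  | 0, f => fun X => ⁅X 0, f Fin.elim0⁆
  | (r + 1), f => fun X =>
      (∑ i : Fin (r + 2), (-1 : ℤ) ^ (i : ℕ) • ⁅X i, f (X ∘ i.succAbove)⁆) +
        ∑ i : Fin (r + 2), ∑ j : Fin (r + 2),
          if h : i < j then
            (-1 : ℤ) ^ ((i : ℕ) + (j : ℕ)) •
              f (Fin.cons ⁅X i, X j⁆
                  ((X ∘ j.succAbove) ∘
                    Fin.succAbove
                      ⟨(i : ℕ), lt_of_lt_of_le (Fin.lt_def.mp h) (Nat.lt_succ_iff.mp j.isLt)⟩))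
          else 0


/-!
`Sq(C)` is, up to sign, half the Nijenhuis–Richardson bracket `[C, C]`, and the
Chevalley–Eilenberg differential is bracketing with the Lie bracket, so the graded Jacobi
identity writes `d Sq(C)` in terms of `dC`. Concretely, `d Sq(C)(x₀, x₁, x₂, x₃)` is a signed sum
of the values `dC(C(xᵢ, xⱼ), xₖ, xₗ)` and `C(dC(xᵢ, xⱼ, xₖ), xₗ)`, an identity that uses only the
bilinearity and antisymmetry of `C` and of the bracket.
-/

namespace LieModule.Cohomology

variable {R L : Type*} [CommRing R] [LieRing L] [LieAlgebra R L]

def d₃₄ (f : L → L → L → L) (x : Fin 4 → L) : L :=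
  ⁅x 0, f (x 1) (x 2) (x 3)⁆ - ⁅x 1, f (x 0) (x 2) (x 3)⁆ + ⁅x 2, f (x 0) (x 1) (x 3)⁆
    - ⁅x 3, f (x 0) (x 1) (x 2)⁆ - f ⁅x 0, x 1⁆ (x 2) (x 3) + f ⁅x 0, x 2⁆ (x 1) (x 3)
    - f ⁅x 0, x 3⁆ (x 1) (x 2) - f ⁅x 1, x 2⁆ (x 0) (x 3) + f ⁅x 1, x 3⁆ (x 0) (x 2)
    - f ⁅x 2, x 3⁆ (x 0) (x 1)

def sq (a : twoCochain R L L) : L [⋀^Fin 3]→ₗ[R] L where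
  toFun v := a (a (v 0) (v 1)) (v 2) + a (a (v 1) (v 2)) (v 0) + a (a (v 2) (v 0)) (v 1)
  map_update_add' m i x y := by
    fin_cases i <;> simp [Fin.ext_iff] <;> abel
  map_update_smul' m i s x := by
    fin_cases i <;> simp [Fin.ext_iff, smul_add]
  map_eq_zero_of_eq' v i j hv hij := by
    have cancel (p q r : L) : a (a p q) r + a (a q p) r = 0 := by
      rw [← twoCochain_skew a p q, map_neg, LinearMap.neg_apply, add_neg_cancel]
    fin_cases i <;> fin_cases j <;> simp_all

@[simp]
lemma sq_apply (a : twoCochain R L L) (v : Fin 3 → L) :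
    sq a v = a (a (v 0) (v 1)) (v 2) + a (a (v 1) (v 2)) (v 0) + a (a (v 2) (v 0)) (v 1) :=
  rfl

lemma d₃₄_sq (a : twoCochain R L L) (x : Fin 4 → L) :
    d₃₄ (fun u v w ↦ sq a ![u, v, w]) x =
      - d₂₃ R L L a (a (x 0) (x 1)) (x 2) (x 3) + d₂₃ R L L a (a (x 0) (x 2)) (x 1) (x 3)
      - d₂₃ R L L a (a (x 0) (x 3)) (x 1) (x 2) - d₂₃ R L L a (a (x 1) (x 2)) (x 0) (x 3)
      + d₂₃ R L L a (a (x 1) (x 3)) (x 0) (x 2) - d₂₃ R L L a (a (x 2) (x 3)) (x 0) (x 1)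
      - a (d₂₃ R L L a (x 1) (x 2) (x 3)) (x 0) + a (d₂₃ R L L a (x 0) (x 2) (x 3)) (x 1)
      - a (d₂₃ R L L a (x 0) (x 1) (x 3)) (x 2) + a (d₂₃ R L L a (x 0) (x 1) (x 2)) (x 3) := by
  have skew (u v : L) : a u v = -a v u := (twoCochain_skew a v u).symm
  -- Normal form for the arguments of `a` and of the bracket: `a`-terms first, then brackets,
  -- then the variables `x i` in increasing order. Both sides then agree as formal sums.
  have a_vars (i j : Fin 4) (_ : j < i) : a (x i) (x j) = -a (x j) (x i) := skew _ _
  have a_var_bracket (i : Fin 4) (p q : L) : a (x i) ⁅p, q⁆ = -a ⁅p, q⁆ (x i) := skew _ _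
  have a_bracket_a (p q r s : L) : a ⁅p, q⁆ (a r s) = -a (a r s) ⁅p, q⁆ := skew _ _
  have bracket_a_var (i : Fin 4) (p q : L) : ⁅a p q, x i⁆ = -⁅x i, a p q⁆ := (lie_skew _ _).symm
  have bracket_a_a (i j k l : Fin 4) (_ : k < i) :
      ⁅a (x i) (x j), a (x k) (x l)⁆ = -⁅a (x k) (x l), a (x i) (x j)⁆ := (lie_skew _ _).symm
  simp only [d₃₄, sq_apply, d₂₃_apply, Matrix.cons_val_zero, Matrix.cons_val_one,
    Matrix.cons_val_two, Matrix.head_cons, Matrix.tail_cons, map_add, map_sub,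
    LinearMap.add_apply, LinearMap.sub_apply, lie_add]
  simp only [a_vars, a_var_bracket, a_bracket_a, bracket_a_var, bracket_a_a, Fin.reduceLT, map_neg,
    LinearMap.neg_apply, lie_neg]
  abel

lemma d₃₄_sq_eq_zero {a : twoCochain R L L} (ha : a ∈ twoCocycle R L L) (x : Fin 4 → L) :
    d₃₄ (fun u v w ↦ sq a ![u, v, w]) x = 0 := by
  have hd : ∀ u v w, d₂₃ R L L a u v w = 0 := by
    simp [(mem_twoCocycle_iff R L L a).1 ha]
  simp only [d₃₄_sq, hd, map_zero, LinearMap.zero_apply, neg_zero, add_zero, sub_zero]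

end LieModule.Cohomology

open LieModule.Cohomology

lemma ceDiff_two_apply (f : (Fin 2 → V) → V) (x y z : V) :
    ceDiff 2 f ![x, y, z] = ⁅x, f ![y, z]⁆ - ⁅y, f ![x, z]⁆ + ⁅z, f ![x, y]⁆
      - f ![⁅x, y⁆, z] + f ![⁅x, z⁆, y] - f ![⁅y, z⁆, x] := by
  have hf : f = fun v ↦ f ![v 0, v 1] :=
    funext fun v ↦ congrArg f (by ext i; fin_cases i <;> rfl)
  conv_lhs => rw [hf]
  simp only [ceDiff, Fin.sum_univ_succ, Fin.sum_univ_zero]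
  simp [Fin.succAbove, sub_eq_add_neg, add_assoc, -lie_skew]

lemma ceDiff_three_apply (f : (Fin 3 → V) → V) (x : Fin 4 → V) :
    ceDiff 3 f x = d₃₄ (fun u v w ↦ f ![u, v, w]) x := by
  have hf : f = fun v ↦ f ![v 0, v 1, v 2] :=
    funext fun v ↦ congrArg f (by ext i; fin_cases i <;> rfl)
  have hcons (u : V) (g : Fin 2 → V) : (Fin.cons u g : Fin 3 → V) = ![u, g 0, g 1] := by
    ext i; fin_cases i <;> rfl
  conv_lhs => rw [hf]
  simp only [ceDiff, Fin.sum_univ_succ, Fin.sum_univ_zero]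
  simp [d₃₄, Fin.succAbove, hcons, sub_eq_add_neg, add_assoc, -lie_skew]

namespace AlternatingMap

variable {R L M : Type*} [CommRing R] [LieRing L] [LieAlgebra R L] [AddCommGroup M] [Module R M]

def toTwoCochain (C : L [⋀^Fin 2]→ₗ[R] M) : twoCochain R L M :=
  ⟨LinearMap.mk₂ R (fun x y ↦ C ![x, y])
    (fun _ _ _ ↦ C.map_vecCons_add _ _ _) (fun _ _ _ ↦ C.map_vecCons_smul _ _ _)
    (fun x _ _ ↦ (C.curryLeft x).map_vecCons_add _ _ _)
    (fun _ x _ ↦ (C.curryLeft x).map_vecCons_smul _ _ _),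
    fun x ↦ C.map_eq_zero_of_eq ![x, x] (i := 0) (j := 1) rfl zero_ne_one⟩

@[simp]
lemma toTwoCochain_apply (C : L [⋀^Fin 2]→ₗ[R] M) (x y : L) : C.toTwoCochain x y = C ![x, y] :=
  rfl

lemma toTwoCochain_mem_twoCocycle_iff [LieAlgebra R V] (C : V [⋀^Fin 2]→ₗ[R] V) :
    C.toTwoCochain ∈ twoCocycle R V V ↔ ceDiff 2 C = 0 := by
  have heta (v : Fin 3 → V) : ![v 0, v 1, v 2] = v := by ext i; fin_cases i <;> rfl
  simp only [mem_twoCocycle_iff, LinearMap.ext_iff, d₂₃_apply, toTwoCochain_apply,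
    LinearMap.zero_apply, ← ceDiff_two_apply, funext_iff, Pi.zero_apply]
  exact ⟨fun h v ↦ heta v ▸ h (v 0) (v 1) (v 2), fun h x y z ↦ h ![x, y, z]⟩

end AlternatingMap

theorem sq_of_two_cocycle_is_three_cocycle_general
    {k : Type*} [Field k] [LieAlgebra k V]
    (C : AlternatingMap k V V (Fin 2)) (hC : ceDiff 2 ⇑C = 0) :
    ∃ G : AlternatingMap k V V (Fin 3),
      (∀ X : Fin 3 → V,
        G X = C ![C ![X 0, X 1], X 2] + C ![C ![X 1, X 2], X 0] + C ![C ![X 2, X 0], X 1]) ∧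
      ceDiff 3 ⇑G = 0 := by
  refine ⟨sq C.toTwoCochain, fun X ↦ rfl, funext fun X ↦ ?_⟩
  rw [ceDiff_three_apply]
  exact d₃₄_sq_eq_zero (C.toTwoCochain_mem_twoCocycle_iff.2 hC) X

/-- Corollary 2.11, cocycle part: if `C` is a 2-cocycle of `𝔤`, then the
alternating trilinear map `Sq(C)(X,Y,Z) = C(C(X,Y),Z) + C(C(Y,Z),X) + C(C(Z,X),Y)` is a
3-cocycle of `𝔤`. -/
theorem sq_of_two_cocycle_is_three_cocycle
    {k : Type*} [Field k] [CharZero k] [LieAlgebra k V] [FiniteDimensional k V]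
    (C : AlternatingMap k V V (Fin 2)) (hC : ceDiff 2 ⇑C = 0) :
    ∃ G : AlternatingMap k V V (Fin 3),
      (∀ X : Fin 3 → V,
        G X = C ![C ![X 0, X 1], X 2] + C ![C ![X 1, X 2], X 0] + C ![C ![X 2, X 0], X 1]) ∧
      ceDiff 3 ⇑G = 0 :=
  sq_of_two_cocycle_is_three_cocycle_general C hC
end

section
/- (Corollary 2.11, well-definedness) If C and C′ are 2-cocycles of 𝔤 whose difference C − C′ is a 2-coboundary, then Sq(C) − Sq(C′) is a 3-coboundary, where Sq(C)(X,Y,Z) = C(C(X,Y),Z) + C(C(Y,Z),X) + C(C(Z,X),Y). Hence the Hessian of the Jacobi relations induces a well-defined quadratic map H_2(𝔤) → H_3(𝔤), C ↦ Sq(C). -/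
set_option linter.unusedSectionVars false
set_option linter.unnecessarySeqFocus false
set_option maxHeartbeats 1600000

variable {V : Type*} [LieRing V]

theorem ceDiff_one (f : (Fin 1 → V) → V) (X : Fin 2 → V) :
    ceDiff 1 f X = ⁅X 0, f ![X 1]⁆ - ⁅X 1, f ![X 0]⁆ - f ![⁅X 0, X 1⁆] := by
  show _ + _ = _
  rw [Fin.sum_univ_two, Fin.sum_univ_two, Fin.sum_univ_two, Fin.sum_univ_two]
  norm_num [Fin.lt_def]
  rw [show X ∘ Fin.succ = ![X 1] from by funext i; fin_cases i <;> rfl,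
    show X ∘ Fin.succAbove 1 = ![X 0] from by funext i; fin_cases i <;> rfl,
    show Fin.cons ⁅X 0, X 1⁆ (![X 0] ∘ Fin.succ) = ![⁅X 0, X 1⁆] from by
      funext i; fin_cases i <;> rfl,
    ← lie_skew (f ![X 0]) (X 1)]
  abel

theorem ceDiff_two (f : (Fin 2 → V) → V) (X : Fin 3 → V) :
    ceDiff 2 f X = ⁅X 0, f ![X 1, X 2]⁆ - ⁅X 1, f ![X 0, X 2]⁆ + ⁅X 2, f ![X 0, X 1]⁆
      - f ![⁅X 0, X 1⁆, X 2] + f ![⁅X 0, X 2⁆, X 1] - f ![⁅X 1, X 2⁆, X 0] := by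
  show _ + _ = _
  rw [Fin.sum_univ_three, Fin.sum_univ_three, Fin.sum_univ_three, Fin.sum_univ_three,
    Fin.sum_univ_three]
  norm_num [Fin.lt_def]
  rw [show X ∘ Fin.succ = ![X 1, X 2] from by funext i; fin_cases i <;> rfl,
    show X ∘ Fin.succAbove 1 = ![X 0, X 2] from by funext i; fin_cases i <;> rfl,
    show X ∘ Fin.succAbove 2 = ![X 0, X 1] from by funext i; fin_cases i <;> rfl,
    show Fin.cons ⁅X 0, X 1⁆ (![X 0, X 2] ∘ Fin.succ) = ![⁅X 0, X 1⁆, X 2] from by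
      funext i; fin_cases i <;> rfl,
    show Fin.cons ⁅X 0, X 2⁆ (![X 0, X 1] ∘ Fin.succ) = ![⁅X 0, X 2⁆, X 1] from by
      funext i; fin_cases i <;> rfl,
    show Fin.cons ⁅X 1, X 2⁆ (![X 0, X 1] ∘ Fin.succAbove 1) = ![⁅X 1, X 2⁆, X 0] from by
      funext i; fin_cases i <;> rfl,
    ← lie_skew (f ![X 0, X 2]) (X 1)]
  abel

section helpers
variable {k : Type*} [Field k] [LieAlgebra k V]

lemma upd0 (u w x : V) : Function.update ![u, w] (0 : Fin 2) x = ![x, w] := by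
  funext i; fin_cases i <;> simp
lemma upd1 (u w x : V) : Function.update ![u, w] (1 : Fin 2) x = ![u, x] := by
  funext i; fin_cases i <;> simp
lemma upd0' (u x : V) : Function.update ![u] (0 : Fin 1) x = ![x] := by
  funext i; fin_cases i <;> simp

lemma f2_add0 (f : AlternatingMap k V V (Fin 2)) (u v w : V) :
    f ![u + v, w] = f ![u, w] + f ![v, w] := by
  have h := f.map_update_add ![u, w] 0 u v
  rwa [upd0, upd0, upd0] at h
lemma f2_add1 (f : AlternatingMap k V V (Fin 2)) (w u v : V) :
    f ![w, u + v] = f ![w, u] + f ![w, v] := by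
  have h := f.map_update_add ![w, u] 1 u v
  rwa [upd1, upd1, upd1] at h
lemma f2_smul0 (f : AlternatingMap k V V (Fin 2)) (c : k) (u w : V) :
    f ![c • u, w] = c • f ![u, w] := by
  have h := f.map_update_smul ![u, w] 0 c u
  rwa [upd0, upd0] at h
lemma f2_smul1 (f : AlternatingMap k V V (Fin 2)) (c : k) (w u : V) :
    f ![w, c • u] = c • f ![w, u] := by
  have h := f.map_update_smul ![w, u] 1 c u
  rwa [upd1, upd1] at h
lemma f1_add (A : AlternatingMap k V V (Fin 1)) (u v : V) :
    A ![u + v] = A ![u] + A ![v] := by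
  have h := A.map_update_add ![u] 0 u v
  rwa [upd0', upd0', upd0'] at h
lemma f1_smul (A : AlternatingMap k V V (Fin 1)) (c : k) (u : V) :
    A ![c • u] = c • A ![u] := by
  have h := A.map_update_smul ![u] 0 c u
  rwa [upd0', upd0'] at h
lemma f2_neg0 (f : AlternatingMap k V V (Fin 2)) (u w : V) :
    f ![-u, w] = - f ![u, w] := by
  have := f2_smul0 f (-1 : k) u w; simpa using this
lemma f2_neg1 (f : AlternatingMap k V V (Fin 2)) (w u : V) :
    f ![w, -u] = - f ![w, u] := by
  have := f2_smul1 f (-1 : k) w u; simpa using this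
lemma f1_neg (A : AlternatingMap k V V (Fin 1)) (u : V) :
    A ![-u] = - A ![u] := by
  have := f1_smul A (-1 : k) u; simpa using this
lemma f2_sub0 (f : AlternatingMap k V V (Fin 2)) (u v w : V) :
    f ![u - v, w] = f ![u, w] - f ![v, w] := by
  rw [sub_eq_add_neg, f2_add0, f2_neg0, ← sub_eq_add_neg]
lemma f2_sub1 (f : AlternatingMap k V V (Fin 2)) (w u v : V) :
    f ![w, u - v] = f ![w, u] - f ![w, v] := by
  rw [sub_eq_add_neg, f2_add1, f2_neg1, ← sub_eq_add_neg]
lemma f1_sub (A : AlternatingMap k V V (Fin 1)) (u v : V) :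
    A ![u - v] = A ![u] - A ![v] := by
  rw [sub_eq_add_neg, f1_add, f1_neg, ← sub_eq_add_neg]
lemma f1_zero (A : AlternatingMap k V V (Fin 1)) : A ![(0:V)] = 0 := by
  have h := A.map_update_zero ![(0:V)] 0
  rwa [upd0'] at h

lemma f2_swap (f : AlternatingMap k V V (Fin 2)) (u v : V) :
    f ![v, u] = - f ![u, v] := by
  have h := f.map_swap ![u, v] (i := 0) (j := 1) (by decide)
  rw [show ![u,v] ∘ Equiv.swap (0:Fin 2) 1 = ![v,u] from by
    funext i; fin_cases i <;> rfl] at h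
  exact h
lemma f2_alt (f : AlternatingMap k V V (Fin 2)) (u : V) : f ![u, u] = 0 :=
  f.map_eq_zero_of_eq ![u, u] (i := 0) (j := 1) rfl (by decide)

/-- the homotopy 2-cochain. -/
noncomputable def sqF (C C' : AlternatingMap k V V (Fin 2)) (A : AlternatingMap k V V (Fin 1)) :
    AlternatingMap k V V (Fin 2) where
  toFun v := (2:k)⁻¹ •
    (C ![A ![v 0], v 1] + C ![v 0, A ![v 1]] + C' ![A ![v 0], v 1] + C' ![v 0, A ![v 1]]
      - A ![C ![v 0, v 1]] - A ![C' ![v 0, v 1]])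
  map_update_add' := by
    intro _ m i x y
    induction i using Fin.cases with
    | zero =>
        simp only [show ∀ t : V, Function.update m (0:Fin 2) t = ![t, m 1] from fun t => by
          funext i; fin_cases i <;> simp]
        simp only [Matrix.cons_val_zero, Matrix.cons_val_one, Matrix.head_cons]
        simp only [f1_add, f2_add0, f2_add1, ← smul_add]
        congr 1
        abel
    | succ i =>
        have hi : i = 0 := Subsingleton.elim _ _
        subst hi
        simp only [show ∀ t : V, Function.update m (Fin.succ (0:Fin 1)) t = ![m 0, t] from fun t => by
          funext i; fin_cases i <;> simp]
        simp only [Matrix.cons_val_zero, Matrix.cons_val_one, Matrix.head_cons]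
        simp only [f1_add, f2_add0, f2_add1, ← smul_add]
        congr 1
        abel
  map_update_smul' := by
    intro _ m i c x
    induction i using Fin.cases with
    | zero =>
        simp only [show ∀ t : V, Function.update m (0:Fin 2) t = ![t, m 1] from fun t => by
          funext i; fin_cases i <;> simp]
        simp only [Matrix.cons_val_zero, Matrix.cons_val_one, Matrix.head_cons]
        simp only [f1_smul, f2_smul0, f2_smul1, ← smul_add, ← smul_sub]
        rw [smul_comm]
    | succ i =>
        have hi : i = 0 := Subsingleton.elim _ _
        subst hi
        simp only [show ∀ t : V, Function.update m (Fin.succ (0:Fin 1)) t = ![m 0, t] from fun t => by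
          funext i; fin_cases i <;> simp]
        simp only [Matrix.cons_val_zero, Matrix.cons_val_one, Matrix.head_cons]
        simp only [f1_smul, f2_smul0, f2_smul1, ← smul_add, ← smul_sub]
        rw [smul_comm]
  map_eq_zero_of_eq' := by
    intro v i j hv hij
    have hv01 : v 0 = v 1 := by
      fin_cases i <;> fin_cases j <;> first | exact hv | exact hv.symm | simp at hij
    rw [show C ![v 0, v 1] = 0 from hv01 ▸ f2_alt C (v 0),
      show C' ![v 0, v 1] = 0 from hv01 ▸ f2_alt C' (v 0)]
    rw [show C ![v 0, A ![v 1]] = - C ![A ![v 0], v 1] from by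
        rw [hv01, f2_swap], 
      show C' ![v 0, A ![v 1]] = - C' ![A ![v 0], v 1] from by
        rw [hv01, f2_swap]]
    simp [f1_zero]

lemma sqF_apply (C C' : AlternatingMap k V V (Fin 2)) (A : AlternatingMap k V V (Fin 1))
    (u v : V) :
    sqF C C' A ![u, v] = (2:k)⁻¹ •
      (C ![A ![u], v] + C ![u, A ![v]] + C' ![A ![u], v] + C' ![u, A ![v]]
        - A ![C ![u, v]] - A ![C' ![u, v]]) := rfl

lemma br_swap (u v : V) : ⁅v, u⁆ = -⁅u, v⁆ := by
  rw [← lie_skew u v, neg_neg]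

lemma fswap0 (f g : AlternatingMap k V V (Fin 2)) (u v w : V) :
    f ![g ![v, u], w] = - f ![g ![u, v], w] := by
  rw [f2_swap g u v, f2_neg0]

lemma brswap0 (f : AlternatingMap k V V (Fin 2)) (u v w : V) :
    f ![⁅v, u⁆, w] = - f ![⁅u, v⁆, w] := by
  rw [br_swap u v, f2_neg0]

end helpers

/-- Corollary 2.11, well-definedness: if `C` and `C'` are 2-cocycles of `𝔤`
whose difference is a 2-coboundary, then `Sq(C) − Sq(C')` is a 3-coboundary, where
`Sq(C)(X,Y,Z) = C(C(X,Y),Z) + C(C(Y,Z),X) + C(C(Z,X),Y)`.  Hence the Hessian of the Jacobi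
relations induces a well-defined quadratic map `H₂(𝔤) → H₃(𝔤)`. -/
theorem sq_descends_to_cohomology
    {k : Type*} [Field k] [CharZero k] [LieAlgebra k V] [FiniteDimensional k V]
    (C C' : AlternatingMap k V V (Fin 2))
    (hC : ceDiff 2 ⇑C = 0) (hC' : ceDiff 2 ⇑C' = 0)
    (hdiff : ∃ A : AlternatingMap k V V (Fin 1), ∀ X : Fin 2 → V, C X - C' X = ceDiff 1 ⇑A X) :
    ∃ F : AlternatingMap k V V (Fin 2), ∀ X : Fin 3 → V,
      (C ![C ![X 0, X 1], X 2] + C ![C ![X 1, X 2], X 0] + C ![C ![X 2, X 0], X 1]) -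
        (C' ![C' ![X 0, X 1], X 2] + C' ![C' ![X 1, X 2], X 0] + C' ![C' ![X 2, X 0], X 1]) =
      ceDiff 2 ⇑F X := by
  obtain ⟨A, hA⟩ := hdiff
  refine ⟨sqF C C' A, fun X => ?_⟩
  have hd01 : C ![X 0, X 1] - C' ![X 0, X 1] = ⁅X 0, A ![X 1]⁆ - ⁅X 1, A ![X 0]⁆ - A ![⁅X 0, X 1⁆] := by
    have h := hA ![X 0, X 1]
    rw [ceDiff_one] at h
    simp only [Matrix.cons_val_zero, Matrix.cons_val_one, Matrix.head_cons, Matrix.cons_val_two, Matrix.tail_cons, Pi.zero_apply] at h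
    exact h
  have hd02 : C ![X 0, X 2] - C' ![X 0, X 2] = ⁅X 0, A ![X 2]⁆ - ⁅X 2, A ![X 0]⁆ - A ![⁅X 0, X 2⁆] := by
    have h := hA ![X 0, X 2]
    rw [ceDiff_one] at h
    simp only [Matrix.cons_val_zero, Matrix.cons_val_one, Matrix.head_cons, Matrix.cons_val_two, Matrix.tail_cons, Pi.zero_apply] at h
    exact h
  have hd12 : C ![X 1, X 2] - C' ![X 1, X 2] = ⁅X 1, A ![X 2]⁆ - ⁅X 2, A ![X 1]⁆ - A ![⁅X 1, X 2⁆] := by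
    have h := hA ![X 1, X 2]
    rw [ceDiff_one] at h
    simp only [Matrix.cons_val_zero, Matrix.cons_val_one, Matrix.head_cons, Matrix.cons_val_two, Matrix.tail_cons, Pi.zero_apply] at h
    exact h
  have hq_C_01 : C ![C ![X 0, X 1], X 2] - C ![C' ![X 0, X 1], X 2] =
        C ![⁅X 0, A ![X 1]⁆, X 2] - C ![⁅X 1, A ![X 0]⁆, X 2] - C ![A ![⁅X 0, X 1⁆], X 2] := by
    have h := congrArg (fun t => C ![t, X 2]) hd01
    simpa only [f2_sub0] using h
  have hq_C_02 : C ![C ![X 0, X 2], X 1] - C ![C' ![X 0, X 2], X 1] =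
        C ![⁅X 0, A ![X 2]⁆, X 1] - C ![⁅X 2, A ![X 0]⁆, X 1] - C ![A ![⁅X 0, X 2⁆], X 1] := by
    have h := congrArg (fun t => C ![t, X 1]) hd02
    simpa only [f2_sub0] using h
  have hq_C_12 : C ![C ![X 1, X 2], X 0] - C ![C' ![X 1, X 2], X 0] =
        C ![⁅X 1, A ![X 2]⁆, X 0] - C ![⁅X 2, A ![X 1]⁆, X 0] - C ![A ![⁅X 1, X 2⁆], X 0] := by
    have h := congrArg (fun t => C ![t, X 0]) hd12
    simpa only [f2_sub0] using h
  have hq_Cp_01 : C' ![C ![X 0, X 1], X 2] - C' ![C' ![X 0, X 1], X 2] =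
        C' ![⁅X 0, A ![X 1]⁆, X 2] - C' ![⁅X 1, A ![X 0]⁆, X 2] - C' ![A ![⁅X 0, X 1⁆], X 2] := by
    have h := congrArg (fun t => C' ![t, X 2]) hd01
    simpa only [f2_sub0] using h
  have hq_Cp_02 : C' ![C ![X 0, X 2], X 1] - C' ![C' ![X 0, X 2], X 1] =
        C' ![⁅X 0, A ![X 2]⁆, X 1] - C' ![⁅X 2, A ![X 0]⁆, X 1] - C' ![A ![⁅X 0, X 2⁆], X 1] := by
    have h := congrArg (fun t => C' ![t, X 1]) hd02
    simpa only [f2_sub0] using h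
  have hq_Cp_12 : C' ![C ![X 1, X 2], X 0] - C' ![C' ![X 1, X 2], X 0] =
        C' ![⁅X 1, A ![X 2]⁆, X 0] - C' ![⁅X 2, A ![X 1]⁆, X 0] - C' ![A ![⁅X 1, X 2⁆], X 0] := by
    have h := congrArg (fun t => C' ![t, X 0]) hd12
    simpa only [f2_sub0] using h
  have hz_C_2 : C ![X 2, C ![X 0, X 1]] - C' ![X 2, C ![X 0, X 1]] = ⁅X 2, A ![C ![X 0, X 1]]⁆ - ⁅C ![X 0, X 1], A ![X 2]⁆ - A ![⁅X 2, C ![X 0, X 1]⁆] := by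
    have h := hA ![X 2, C ![X 0, X 1]]
    rw [ceDiff_one] at h
    simp only [Matrix.cons_val_zero, Matrix.cons_val_one, Matrix.head_cons, Matrix.cons_val_two, Matrix.tail_cons, Pi.zero_apply] at h
    exact h
  have hz_C_1 : C ![X 1, C ![X 0, X 2]] - C' ![X 1, C ![X 0, X 2]] = ⁅X 1, A ![C ![X 0, X 2]]⁆ - ⁅C ![X 0, X 2], A ![X 1]⁆ - A ![⁅X 1, C ![X 0, X 2]⁆] := by
    have h := hA ![X 1, C ![X 0, X 2]]
    rw [ceDiff_one] at h
    simp only [Matrix.cons_val_zero, Matrix.cons_val_one, Matrix.head_cons, Matrix.cons_val_two, Matrix.tail_cons, Pi.zero_apply] at h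
    exact h
  have hz_C_0 : C ![X 0, C ![X 1, X 2]] - C' ![X 0, C ![X 1, X 2]] = ⁅X 0, A ![C ![X 1, X 2]]⁆ - ⁅C ![X 1, X 2], A ![X 0]⁆ - A ![⁅X 0, C ![X 1, X 2]⁆] := by
    have h := hA ![X 0, C ![X 1, X 2]]
    rw [ceDiff_one] at h
    simp only [Matrix.cons_val_zero, Matrix.cons_val_one, Matrix.head_cons, Matrix.cons_val_two, Matrix.tail_cons, Pi.zero_apply] at h
    exact h
  have hz_Cp_2 : C ![X 2, C' ![X 0, X 1]] - C' ![X 2, C' ![X 0, X 1]] = ⁅X 2, A ![C' ![X 0, X 1]]⁆ - ⁅C' ![X 0, X 1], A ![X 2]⁆ - A ![⁅X 2, C' ![X 0, X 1]⁆] := by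
    have h := hA ![X 2, C' ![X 0, X 1]]
    rw [ceDiff_one] at h
    simp only [Matrix.cons_val_zero, Matrix.cons_val_one, Matrix.head_cons, Matrix.cons_val_two, Matrix.tail_cons, Pi.zero_apply] at h
    exact h
  have hz_Cp_1 : C ![X 1, C' ![X 0, X 2]] - C' ![X 1, C' ![X 0, X 2]] = ⁅X 1, A ![C' ![X 0, X 2]]⁆ - ⁅C' ![X 0, X 2], A ![X 1]⁆ - A ![⁅X 1, C' ![X 0, X 2]⁆] := by
    have h := hA ![X 1, C' ![X 0, X 2]]
    rw [ceDiff_one] at h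
    simp only [Matrix.cons_val_zero, Matrix.cons_val_one, Matrix.head_cons, Matrix.cons_val_two, Matrix.tail_cons, Pi.zero_apply] at h
    exact h
  have hz_Cp_0 : C ![X 0, C' ![X 1, X 2]] - C' ![X 0, C' ![X 1, X 2]] = ⁅X 0, A ![C' ![X 1, X 2]]⁆ - ⁅C' ![X 1, X 2], A ![X 0]⁆ - A ![⁅X 0, C' ![X 1, X 2]⁆] := by
    have h := hA ![X 0, C' ![X 1, X 2]]
    rw [ceDiff_one] at h
    simp only [Matrix.cons_val_zero, Matrix.cons_val_one, Matrix.head_cons, Matrix.cons_val_two, Matrix.tail_cons, Pi.zero_apply] at h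
    exact h
  have hdl_C_0 : ⁅A ![X 0], C ![X 1, X 2]⁆ - ⁅X 1, C ![A ![X 0], X 2]⁆ + ⁅X 2, C ![A ![X 0], X 1]⁆ - C ![⁅A ![X 0], X 1⁆, X 2] + C ![⁅A ![X 0], X 2⁆, X 1] - C ![⁅X 1, X 2⁆, A ![X 0]] = 0 := by
    have h := congrFun hC ![A ![X 0], X 1, X 2]
    rw [ceDiff_two] at h
    simp only [Matrix.cons_val_zero, Matrix.cons_val_one, Matrix.head_cons, Matrix.cons_val_two, Matrix.tail_cons, Pi.zero_apply] at h
    exact h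
  have hdl_C_1 : ⁅X 0, C ![A ![X 1], X 2]⁆ - ⁅A ![X 1], C ![X 0, X 2]⁆ + ⁅X 2, C ![X 0, A ![X 1]]⁆ - C ![⁅X 0, A ![X 1]⁆, X 2] + C ![⁅X 0, X 2⁆, A ![X 1]] - C ![⁅A ![X 1], X 2⁆, X 0] = 0 := by
    have h := congrFun hC ![X 0, A ![X 1], X 2]
    rw [ceDiff_two] at h
    simp only [Matrix.cons_val_zero, Matrix.cons_val_one, Matrix.head_cons, Matrix.cons_val_two, Matrix.tail_cons, Pi.zero_apply] at h
    exact h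
  have hdl_C_2 : ⁅X 0, C ![X 1, A ![X 2]]⁆ - ⁅X 1, C ![X 0, A ![X 2]]⁆ + ⁅A ![X 2], C ![X 0, X 1]⁆ - C ![⁅X 0, X 1⁆, A ![X 2]] + C ![⁅X 0, A ![X 2]⁆, X 1] - C ![⁅X 1, A ![X 2]⁆, X 0] = 0 := by
    have h := congrFun hC ![X 0, X 1, A ![X 2]]
    rw [ceDiff_two] at h
    simp only [Matrix.cons_val_zero, Matrix.cons_val_one, Matrix.head_cons, Matrix.cons_val_two, Matrix.tail_cons, Pi.zero_apply] at h
    exact h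
  have hdl_Cp_0 : ⁅A ![X 0], C' ![X 1, X 2]⁆ - ⁅X 1, C' ![A ![X 0], X 2]⁆ + ⁅X 2, C' ![A ![X 0], X 1]⁆ - C' ![⁅A ![X 0], X 1⁆, X 2] + C' ![⁅A ![X 0], X 2⁆, X 1] - C' ![⁅X 1, X 2⁆, A ![X 0]] = 0 := by
    have h := congrFun hC' ![A ![X 0], X 1, X 2]
    rw [ceDiff_two] at h
    simp only [Matrix.cons_val_zero, Matrix.cons_val_one, Matrix.head_cons, Matrix.cons_val_two, Matrix.tail_cons, Pi.zero_apply] at h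
    exact h
  have hdl_Cp_1 : ⁅X 0, C' ![A ![X 1], X 2]⁆ - ⁅A ![X 1], C' ![X 0, X 2]⁆ + ⁅X 2, C' ![X 0, A ![X 1]]⁆ - C' ![⁅X 0, A ![X 1]⁆, X 2] + C' ![⁅X 0, X 2⁆, A ![X 1]] - C' ![⁅A ![X 1], X 2⁆, X 0] = 0 := by
    have h := congrFun hC' ![X 0, A ![X 1], X 2]
    rw [ceDiff_two] at h
    simp only [Matrix.cons_val_zero, Matrix.cons_val_one, Matrix.head_cons, Matrix.cons_val_two, Matrix.tail_cons, Pi.zero_apply] at h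
    exact h
  have hdl_Cp_2 : ⁅X 0, C' ![X 1, A ![X 2]]⁆ - ⁅X 1, C' ![X 0, A ![X 2]]⁆ + ⁅A ![X 2], C' ![X 0, X 1]⁆ - C' ![⁅X 0, X 1⁆, A ![X 2]] + C' ![⁅X 0, A ![X 2]⁆, X 1] - C' ![⁅X 1, A ![X 2]⁆, X 0] = 0 := by
    have h := congrFun hC' ![X 0, X 1, A ![X 2]]
    rw [ceDiff_two] at h
    simp only [Matrix.cons_val_zero, Matrix.cons_val_one, Matrix.head_cons, Matrix.cons_val_two, Matrix.tail_cons, Pi.zero_apply] at h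
    exact h
  have hal_C : A ![⁅X 0, C ![X 1, X 2]⁆] - A ![⁅X 1, C ![X 0, X 2]⁆] + A ![⁅X 2, C ![X 0, X 1]⁆] - A ![C ![⁅X 0, X 1⁆, X 2]] + A ![C ![⁅X 0, X 2⁆, X 1]] - A ![C ![⁅X 1, X 2⁆, X 0]] = 0 := by
    have h := congrFun hC ![X 0, X 1, X 2]
    rw [ceDiff_two] at h
    simp only [Matrix.cons_val_zero, Matrix.cons_val_one, Matrix.head_cons, Matrix.cons_val_two, Matrix.tail_cons, Pi.zero_apply] at h
    have h2 := congrArg (fun t => A ![t]) h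
    simpa only [f1_sub, f1_add, f1_zero] using h2
  have hal_Cp : A ![⁅X 0, C' ![X 1, X 2]⁆] - A ![⁅X 1, C' ![X 0, X 2]⁆] + A ![⁅X 2, C' ![X 0, X 1]⁆] - A ![C' ![⁅X 0, X 1⁆, X 2]] + A ![C' ![⁅X 0, X 2⁆, X 1]] - A ![C' ![⁅X 1, X 2⁆, X 0]] = 0 := by
    have h := congrFun hC' ![X 0, X 1, X 2]
    rw [ceDiff_two] at h
    simp only [Matrix.cons_val_zero, Matrix.cons_val_one, Matrix.head_cons, Matrix.cons_val_two, Matrix.tail_cons, Pi.zero_apply] at h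
    have h2 := congrArg (fun t => A ![t]) h
    simpa only [f1_sub, f1_add, f1_zero] using h2
  apply smul_right_injective V (two_ne_zero (α := k))
  show (2:k) • _ = (2:k) • _
  rw [ceDiff_two]
  simp only [sqF_apply, lie_smul, lie_add, lie_sub, smul_add, smul_sub, smul_neg, smul_smul,
    mul_inv_cancel₀ (two_ne_zero (α := k)), one_smul]
  linear_combination (norm := module) hq_C_01 - hq_C_02 + hq_C_12 + hq_Cp_01 - hq_Cp_02 + hq_Cp_12
      - hz_C_2 + hz_C_1 - hz_C_0 - hz_Cp_2 + hz_Cp_1 - hz_Cp_0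
      - hdl_C_0 - hdl_C_1 - hdl_C_2 - hdl_Cp_0 - hdl_Cp_1 - hdl_Cp_2
      + hal_C + hal_Cp
      + f2_swap C (C ![X 0, X 1]) (X 2) - f2_swap C (C ![X 0, X 2]) (X 1)
      + (2:ℤ) • fswap0 C C (X 0) (X 2) (X 1)
      + f2_swap C (C ![X 1, X 2]) (X 0)
      + f2_swap C (C' ![X 0, X 1]) (X 2) - f2_swap C (C' ![X 0, X 2]) (X 1)
      + f2_swap C (C' ![X 1, X 2]) (X 0)
      - brswap0 C (A ![X 0]) (X 1) (X 2) + brswap0 C (A ![X 0]) (X 2) (X 1)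
      - brswap0 C (A ![X 1]) (X 2) (X 0)
      - f2_swap C' (C ![X 0, X 1]) (X 2) + f2_swap C' (C ![X 0, X 2]) (X 1)
      - f2_swap C' (C ![X 1, X 2]) (X 0)
      - f2_swap C' (C' ![X 0, X 1]) (X 2) + f2_swap C' (C' ![X 0, X 2]) (X 1)
      - (2:ℤ) • fswap0 C' C' (X 0) (X 2) (X 1)
      - f2_swap C' (C' ![X 1, X 2]) (X 0)
      - brswap0 C' (A ![X 0]) (X 1) (X 2) + brswap0 C' (A ![X 0]) (X 2) (X 1)
      - brswap0 C' (A ![X 1]) (X 2) (X 0)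
      + br_swap (C ![X 0, X 1]) (A ![X 2]) - br_swap (C ![X 0, X 2]) (A ![X 1])
      + br_swap (C ![X 1, X 2]) (A ![X 0])
      + br_swap (C' ![X 0, X 1]) (A ![X 2]) - br_swap (C' ![X 0, X 2]) (A ![X 1])
      + br_swap (C' ![X 1, X 2]) (A ![X 0])
end

section
/- (Second-order integrability condition, ν = 1) Let B : ℝ → (V × V → V) be a family of bilinear alternating brackets with B_0 = [·,·], each B_t satisfying the Jacobi identity, and suppose for all X, Y the map t ↦ B_t(X,Y) is twice differentiable at t = 0, with first derivative C_1(X,Y) and second derivative C_2(X,Y) at t = 0. Then for all X, Y, Z ∈ V: C_2([X,Y],Z) + C_2([Y,Z],X) + C_2([Z,X],Y) + [C_2(X,Y),Z] + [C_2(Y,Z),X] + [C_2(Z,X),Y] + 2·( C_1(C_1(X,Y),Z) + C_1(C_1(Y,Z),X) + C_1(C_1(Z,X),Y) ) = 0, i.e. dC_2 plus the Hessian of the Jacobi relations evaluated on (C_1, C_1) vanishes. -/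
/-!
Differentiate the Jacobi identity of `B t` twice at `t = 0`. The derivatives `B'`, `C1`, `C2` are
not assumed bilinear, but in finite dimension a pointwise derivative of a family of linear maps
is forced to be linear (expand in a basis and use uniqueness of derivatives). Near `0` the
first derivatives are replaced by such linear maps, after which the product rule applies twice
to `t ↦ B t (B t X Y) Z`, with the first slot playing the role of the argument.
-/

open Filter Topology

def HasSecondDerivAt {W : Type*} [NormedAddCommGroup W] [NormedSpace ℝ W]
    (f : ℝ → W) (f'' : W) (t₀ : ℝ) : Prop :=
  ∃ f' : ℝ → W, (∀ᶠ t in 𝓝 t₀, HasDerivAt f (f' t) t) ∧ HasDerivAt f' f'' t₀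

section SecondDeriv

variable {W : Type*} [NormedAddCommGroup W] [NormedSpace ℝ W]

theorem hasSecondDerivAt_const (t₀ : ℝ) (c : W) : HasSecondDerivAt (fun _ => c) 0 t₀ :=
  ⟨fun _ => 0, .of_forall fun t => hasDerivAt_const t c, hasDerivAt_const t₀ 0⟩

theorem HasSecondDerivAt.add {f g : ℝ → W} {f'' g'' : W} {t₀ : ℝ}
    (hf : HasSecondDerivAt f f'' t₀) (hg : HasSecondDerivAt g g'' t₀) :
    HasSecondDerivAt (fun t => f t + g t) (f'' + g'') t₀ := by
  obtain ⟨f', hf', hf''⟩ := hf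
  obtain ⟨g', hg', hg''⟩ := hg
  exact ⟨fun t => f' t + g' t, by filter_upwards [hf', hg'] with t hft hgt using hft.add hgt,
    hf''.add hg''⟩

theorem HasSecondDerivAt.unique {f : ℝ → W} {a b : W} {t₀ : ℝ}
    (ha : HasSecondDerivAt f a t₀) (hb : HasSecondDerivAt f b t₀) : a = b := by
  obtain ⟨f', hf', ha⟩ := ha
  obtain ⟨g', hg', hb⟩ := hb
  have hfg : f' =ᶠ[𝓝 t₀] g' := by
    filter_upwards [hf', hg'] with t hft hgt using hft.unique hgt
  exact ha.unique (hb.congr_of_eventuallyEq hfg)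

end SecondDeriv

section LinearFamily

variable {V W : Type*} [NormedAddCommGroup W] [NormedSpace ℝ W]

theorem Module.Basis.linearMap_apply_eq_sum [AddCommGroup V] [Module ℝ V] {ι : Type*}
    [Fintype ι] (b : Module.Basis ι ℝ V) (f : V →ₗ[ℝ] W) (v : V) :
    f v = ∑ i, b.equivFun v i • f (b i) := by
  conv_lhs => rw [← b.sum_equivFun v]
  simp only [map_sum, map_smul]

theorem hasDerivAt_linearMap_apply_of_basis [AddCommGroup V] [Module ℝ V] {ι : Type*}
    [Fintype ι] (b : Module.Basis ι ℝ V) {L : ℝ → V →ₗ[ℝ] W} {D : ι → W} {t : ℝ}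
    (h : ∀ i, HasDerivAt (fun s => L s (b i)) (D i) t) (v : V) :
    HasDerivAt (fun s => L s v) (b.constr ℝ D v) t := by
  rw [b.constr_apply_fintype ℝ]
  simp only [b.linearMap_apply_eq_sum (L _) v]
  exact HasDerivAt.fun_sum fun i _ => (h i).const_smul _

theorem exists_linearMap_hasDerivAt_apply [AddCommGroup V] [Module ℝ V] [FiniteDimensional ℝ V]
    {L : ℝ → V →ₗ[ℝ] W} {L' : ℝ → V → W} {t₀ : ℝ}
    (hL : ∀ v, ∀ᶠ t in 𝓝 t₀, HasDerivAt (fun s => L s v) (L' t v) t) :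
    ∃ D : ℝ → V →ₗ[ℝ] W, (∀ᶠ t in 𝓝 t₀, ∀ v, HasDerivAt (fun s => L s v) (D t v) t) ∧
      ∀ v, (fun t => L' t v) =ᶠ[𝓝 t₀] fun t => D t v := by
  set b := Module.finBasis ℝ V
  have hD : ∀ᶠ t in 𝓝 t₀, ∀ v, HasDerivAt (fun s => L s v)
      (b.constr ℝ (fun i => L' t (b i)) v) t := by
    filter_upwards [eventually_all.2 fun i => hL (b i)] with t ht
    exact hasDerivAt_linearMap_apply_of_basis b ht
  refine ⟨fun t => b.constr ℝ fun i => L' t (b i), hD, fun v => ?_⟩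
  filter_upwards [hL v, hD] with t hLt hDt using hLt.unique (hDt v)

variable [NormedAddCommGroup V] [NormedSpace ℝ V] [FiniteDimensional ℝ V]

theorem HasDerivAt.linearMap_apply {L : ℝ → V →ₗ[ℝ] W} {D : V → W} {u : ℝ → V} {u' : V}
    {t : ℝ} (hL : ∀ v, HasDerivAt (fun s => L s v) (D v) t) (hu : HasDerivAt u u' t) :
    HasDerivAt (fun s => L s (u s)) (L t u' + D (u t)) t := by
  set b := Module.finBasis ℝ V
  have hD : ∀ v, D v = ∑ i, b.equivFun v i • D (b i) := fun v =>
    ((hL v).unique (hasDerivAt_linearMap_apply_of_basis b (fun i => hL (b i)) v)).trans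
      (b.constr_apply_fintype ℝ _ v)
  have hcoord : ∀ i, HasDerivAt (fun s => b.equivFun (u s) i) (b.equivFun u' i) t := fun i =>
    (LinearMap.toContinuousLinearMap (b.coord i)).hasFDerivAt.comp_hasDerivAt t hu
  rw [add_comm, hD, b.linearMap_apply_eq_sum (L t) u', ← Finset.sum_add_distrib]
  simp only [b.linearMap_apply_eq_sum (L _) (u _)]
  exact HasDerivAt.fun_sum fun i _ => (hcoord i).fun_smul (hL (b i))

theorem HasSecondDerivAt.linearMap_apply {L : ℝ → V →ₗ[ℝ] W} {L' : ℝ → V → W} {L'' : V → W}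
    {u u' : ℝ → V} {u'' : V} {t₀ : ℝ}
    (hL' : ∀ v, ∀ᶠ t in 𝓝 t₀, HasDerivAt (fun s => L s v) (L' t v) t)
    (hL'' : ∀ v, HasDerivAt (fun t => L' t v) (L'' v) t₀)
    (hu' : ∀ᶠ t in 𝓝 t₀, HasDerivAt u (u' t) t) (hu'' : HasDerivAt u' u'' t₀) :
    HasSecondDerivAt (fun t => L t (u t)) (L t₀ u'' + 2 • L' t₀ (u' t₀) + L'' (u t₀)) t₀ := by
  obtain ⟨D, hD, hL'D⟩ := exists_linearMap_hasDerivAt_apply hL'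
  refine ⟨fun t => L t (u' t) + D t (u t), ?_, ?_⟩
  · filter_upwards [hD, hu'] with t hDt hut using HasDerivAt.linearMap_apply hDt hut
  · have hL_u' := HasDerivAt.linearMap_apply hD.self_of_nhds hu''
    have hD_u := HasDerivAt.linearMap_apply
      (fun v => (hL'' v).congr_of_eventuallyEq (hL'D v).symm) hu'.self_of_nhds
    refine (hL_u'.add hD_u).congr_deriv ?_
    rw [(hL'D _).eq_of_nhds]
    module

end LinearFamily

theorem second_order_integrability_condition_general
    {V : Type*} [NormedAddCommGroup V] [NormedSpace ℝ V] [FiniteDimensional ℝ V]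
    (bracket : V →ₗ[ℝ] V →ₗ[ℝ] V)
    (B : ℝ → V →ₗ[ℝ] V →ₗ[ℝ] V)
    (hB0 : B 0 = bracket)
    (hBjac : ∀ t : ℝ, ∀ X Y Z : V,
      B t (B t X Y) Z + B t (B t Y Z) X + B t (B t Z X) Y = 0)
    (B' : ℝ → V → V → V) (C1 C2 : V → V → V)
    (hB' : ∀ X Y : V, ∀ᶠ t in nhds (0 : ℝ), HasDerivAt (fun s : ℝ => B s X Y) (B' t X Y) t)
    (hB'0 : ∀ X Y : V, B' 0 X Y = C1 X Y)
    (hC2 : ∀ X Y : V, HasDerivAt (fun t : ℝ => B' t X Y) (C2 X Y) 0) :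
    ∀ X Y Z : V,
      C2 (bracket X Y) Z + C2 (bracket Y Z) X + C2 (bracket Z X) Y +
        bracket (C2 X Y) Z + bracket (C2 Y Z) X + bracket (C2 Z X) Y +
        2 • (C1 (C1 X Y) Z + C1 (C1 Y Z) X + C1 (C1 Z X) Y) = 0 := by
  intro X Y Z
  have hterm : ∀ X Y Z : V, HasSecondDerivAt (fun t => B t (B t X Y) Z)
      (bracket (C2 X Y) Z + 2 • C1 (C1 X Y) Z + C2 (bracket X Y) Z) 0 := fun X Y Z => by
    simpa [hB0, hB'0] using HasSecondDerivAt.linearMap_apply (L := fun t => (B t).flip Z)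
      (fun v => hB' v Z) (fun v => hC2 v Z) (hB' X Y) (hC2 X Y)
  have hjacobi := ((hterm X Y Z).add (hterm Y Z X)).add (hterm Z X Y)
  simp only [hBjac] at hjacobi
  rw [← hjacobi.unique (hasSecondDerivAt_const 0 0)]
  module

/-- second-order integrability condition, ν = 1: let `B t` be a family of
bilinear alternating brackets with `B 0 = bracket`, each satisfying the Jacobi identity,
twice differentiable at `t = 0` (first derivative `B'` on a neighborhood of `0`, with
`B' 0 = C1`, and `t ↦ B' t X Y` differentiable at `0` with derivative `C2 X Y`).  Then
`dC2` plus the Hessian of the Jacobi relations evaluated on `(C1, C1)` vanishes. -/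
theorem second_order_integrability_condition
    {V : Type*} [NormedAddCommGroup V] [NormedSpace ℝ V] [FiniteDimensional ℝ V]
    (bracket : V →ₗ[ℝ] V →ₗ[ℝ] V)
    (halt : ∀ X : V, bracket X X = 0)
    (hjac : ∀ X Y Z : V,
      bracket (bracket X Y) Z + bracket (bracket Y Z) X + bracket (bracket Z X) Y = 0)
    (B : ℝ → V →ₗ[ℝ] V →ₗ[ℝ] V)
    (hB0 : B 0 = bracket)
    (hBalt : ∀ t : ℝ, ∀ X : V, B t X X = 0)
    (hBjac : ∀ t : ℝ, ∀ X Y Z : V,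
      B t (B t X Y) Z + B t (B t Y Z) X + B t (B t Z X) Y = 0)
    (B' : ℝ → V → V → V) (C1 C2 : V → V → V)
    (hB' : ∀ X Y : V, ∀ᶠ t in nhds (0 : ℝ), HasDerivAt (fun s : ℝ => B s X Y) (B' t X Y) t)
    (hB'0 : ∀ X Y : V, B' 0 X Y = C1 X Y)
    (hC2 : ∀ X Y : V, HasDerivAt (fun t : ℝ => B' t X Y) (C2 X Y) 0) :
    ∀ X Y Z : V,
      C2 (bracket X Y) Z + C2 (bracket Y Z) X + C2 (bracket Z X) Y +
        bracket (C2 X Y) Z + bracket (C2 Y Z) X + bracket (C2 Z X) Y +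
        2 • (C1 (C1 X Y) Z + C1 (C1 Y Z) X + C1 (C1 Z X) Y) = 0 :=
  second_order_integrability_condition_general bracket B hB0 hBjac B' C1 C2 hB' hB'0 hC2
end

section
/- (Example 1.1, closure of the Vessiot/Maurer–Cartan equations) Let U ⊆ ℝⁿ be a nonempty open set and let ω be a coframe on U satisfying the Maurer–Cartan (Vessiot) structure equations with structure constants c = (c^τ_{ρσ}), c^τ_{ρσ} = −c^τ_{σρ}. Then c satisfies the quadratic Jacobi relations: Σ_μ ( c^λ_{μρ} c^μ_{στ} + c^λ_{μσ} c^μ_{τρ} + c^λ_{μτ} c^μ_{ρσ} ) = 0 for all indices λ, ρ, σ, τ. -/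
/-!
Write `[u, v]^τ = Σ c^τ_{ρσ} u^ρ v^σ`. Differentiating the structure equations
`∂_i ω_j - ∂_j ω_i = [ω_i, ω_j]` (with `ω_i` the vector `(ω^τ_i)_τ`) and summing cyclically over
`i, j, k`, the left side vanishes by symmetry of second derivatives (`d² = 0`), while by the
Leibniz rule, skew-symmetry and the structure equations once more the right side becomes the
Jacobiator `[[ω_i, ω_j], ω_k] + [[ω_j, ω_k], ω_i] + [[ω_k, ω_i], ω_j]`. So the trilinear Jacobiator
vanishes on the vectors `ω_i(x)`, which span `ℝⁿ` because `ω(x)` is invertible; hence it vanishes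
identically, and on standard basis vectors this is the Jacobi relation.
-/

/-- The `i`-th partial derivative of a function `f : ℝⁿ → ℝ` at `x`. -/
noncomputable def pd {n : ℕ} (i : Fin n) (f : (Fin n → ℝ) → ℝ) (x : Fin n → ℝ) : ℝ :=
  fderiv ℝ f x (Pi.single i 1)

open Filter Topology

section PartialDerivative

variable {n : ℕ} {f g : (Fin n → ℝ) → ℝ} {x : Fin n → ℝ} {i j k : Fin n}

lemma pd_congr_of_eventuallyEq (h : f =ᶠ[𝓝 x] g) : pd i f x = pd i g x := by
  rw [pd, pd, h.fderiv_eq]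

lemma pd_fun_sub (hf : DifferentiableAt ℝ f x) (hg : DifferentiableAt ℝ g x) :
    pd i (fun y => f y - g y) x = pd i f x - pd i g x := by
  simp [pd, fderiv_fun_sub hf hg]

lemma pd_fun_sum {ι : Type*} {s : Finset ι} {F : ι → (Fin n → ℝ) → ℝ}
    (h : ∀ b ∈ s, DifferentiableAt ℝ (F b) x) :
    pd i (fun y => ∑ b ∈ s, F b y) x = ∑ b ∈ s, pd i (F b) x := by
  simp [pd, fderiv_fun_sum h]

lemma pd_const_mul_mul (a : ℝ) (hf : DifferentiableAt ℝ f x) (hg : DifferentiableAt ℝ g x) :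
    pd i (fun y => a * f y * g y) x = a * pd i f x * g x + a * f x * pd i g x := by
  simp only [pd, fderiv_fun_mul (hf.const_mul a) hg, fderiv_const_mul hf,
    add_apply, smul_apply, smul_eq_mul]
  ring

lemma ContDiffAt.differentiableAt_pd (hf : ContDiffAt ℝ 2 f x) :
    DifferentiableAt ℝ (pd i f) x :=
  ((hf.fderiv_right (by norm_num)).clm_apply contDiffAt_const).differentiableAt one_ne_zero

lemma ContDiffAt.pd_pd_comm (hf : ContDiffAt ℝ 2 f x) : pd i (pd k f) x = pd k (pd i f) x := by
  have hsymm := hf.isSymmSndFDerivAt (by simp [minSmoothness_of_isRCLikeNormedField])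
  have hd : DifferentiableAt ℝ (fderiv ℝ f) x :=
    (hf.fderiv_right (by norm_num)).differentiableAt one_ne_zero
  change fderiv ℝ (fun y => fderiv ℝ f y (Pi.single k 1)) x (Pi.single i 1)
    = fderiv ℝ (fun y => fderiv ℝ f y (Pi.single i 1)) x (Pi.single k 1)
  simpa [fderiv_clm_apply hd (differentiableAt_const _)] using hsymm _ _

lemma pd_curl_cyclic_sum {f : Fin n → (Fin n → ℝ) → ℝ} (hf : ∀ i, ContDiffAt ℝ 2 (f i) x) :
    pd k (fun y => pd i (f j) y - pd j (f i) y) x + pd i (fun y => pd j (f k) y - pd k (f j) y) x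
      + pd j (fun y => pd k (f i) y - pd i (f k) y) x = 0 := by
  simp only [pd_fun_sub (hf _).differentiableAt_pd (hf _).differentiableAt_pd,
    (hf i).pd_pd_comm (i := k) (k := j), (hf j).pd_pd_comm (i := k) (k := i),
    (hf k).pd_pd_comm (i := i) (k := j)]
  ring

end PartialDerivative

section Jacobiator

variable {R V ι : Type*} [CommRing R] [AddCommGroup V] [Module R V]

def jacobiator (B : V →ₗ[R] V →ₗ[R] V) (u v w : V) : V :=
  B (B u v) w + B (B v w) u + B (B w u) v

variable (B : V →ₗ[R] V →ₗ[R] V)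

lemma jacobiator_rotate (u v w : V) : jacobiator B u v w = jacobiator B v w u := by
  simp only [jacobiator]; abel

lemma jacobiator_eq_zero_of_span_eq_top {b : ι → V} (hb : Submodule.span R (Set.range b) = ⊤)
    (h : ∀ i j k, jacobiator B (b i) (b j) (b k) = 0) (u v w : V) :
    jacobiator B u v w = 0 := by
  have extend_left : ∀ v w, (∀ i, jacobiator B (b i) v w = 0) → ∀ u, jacobiator B u v w = 0 := by
    intro v w hvw u
    -- `jacobiator B · v w` as a linear map
    have hL : B.flip w ∘ₗ B.flip v + B (B v w) + B.flip v ∘ₗ B w = 0 :=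
      LinearMap.ext_on_range hb fun i => by simpa [jacobiator] using hvw i
    simpa [jacobiator] using LinearMap.congr_fun hL u
  -- Cyclic invariance carries linearity from the first slot to the other two.
  have h₁ : ∀ u j k, jacobiator B u (b j) (b k) = 0 := fun u j k =>
    extend_left _ _ (fun i => h i j k) u
  have h₂ : ∀ u k v, jacobiator B v (b k) u = 0 := fun u k =>
    extend_left _ _ fun j => by rw [← jacobiator_rotate, h₁]
  exact extend_left _ _ (fun k => by rw [jacobiator_rotate, jacobiator_rotate, h₂]) u

/-- Read `D k i` as `∂_k W_i`: the right side is the cyclic sum of `∂_k B (W i) (W j)`,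
expanded by the Leibniz rule. -/
lemma jacobiator_eq_cyclic_sum_leibniz (hB : ∀ u v, B u v = -B v u) (W : ι → V)
    (D : ι → ι → V) (hD : ∀ i j, D i j - D j i = B (W i) (W j)) (i j k : ι) :
    jacobiator B (W i) (W j) (W k) =
      (B (D k i) (W j) + B (W i) (D k j)) + (B (D i j) (W k) + B (W j) (D i k)) +
        (B (D j k) (W i) + B (W k) (D j i)) := by
  rw [hB (W i), hB (W j), hB (W k)]
  simp only [jacobiator, ← hD, map_sub, LinearMap.sub_apply]
  abel

end Jacobiator

section Bracket

variable {n : ℕ} (c : Fin n → Fin n → Fin n → ℝ)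

def bracket : (Fin n → ℝ) →ₗ[ℝ] (Fin n → ℝ) →ₗ[ℝ] (Fin n → ℝ) :=
  LinearMap.mk₂ ℝ (fun u v τ => ∑ ρ, ∑ σ, c τ ρ σ * u ρ * v σ)
    (fun u u' v => by funext τ; simp [mul_add, add_mul, Finset.sum_add_distrib])
    (fun a u v => by funext τ; simp [Finset.mul_sum, mul_assoc, mul_left_comm])
    (fun u v v' => by funext τ; simp [mul_add, Finset.sum_add_distrib])
    (fun a u v => by funext τ; simp [Finset.mul_sum, mul_assoc, mul_left_comm])

lemma bracket_apply (u v : Fin n → ℝ) (τ : Fin n) :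
    bracket c u v τ = ∑ ρ, ∑ σ, c τ ρ σ * u ρ * v σ := rfl

variable {c}

lemma bracket_skew (hc : ∀ τ ρ σ, c τ ρ σ = -c τ σ ρ) (u v : Fin n → ℝ) :
    bracket c u v = -bracket c v u := by
  funext τ
  simp only [bracket_apply, Pi.neg_apply, ← Finset.sum_neg_distrib]
  rw [Finset.sum_comm]
  refine Finset.sum_congr rfl fun σ _ => Finset.sum_congr rfl fun ρ _ => ?_
  rw [hc τ ρ σ]
  ring

lemma jacobiator_bracket_single (l a b e : Fin n) :
    jacobiator (bracket c) (Pi.single b 1) (Pi.single e 1) (Pi.single a 1) l =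
      ∑ μ, (c l μ a * c μ b e + c l μ b * c μ e a + c l μ e * c μ a b) := by
  simp only [jacobiator, Pi.add_apply, bracket_apply]
  simp [Pi.single_apply, Finset.sum_add_distrib]

lemma pd_bracket {F G : Fin n → (Fin n → ℝ) → ℝ} {x : Fin n → ℝ}
    (hF : ∀ ρ, DifferentiableAt ℝ (F ρ) x) (hG : ∀ ρ, DifferentiableAt ℝ (G ρ) x) (k τ : Fin n) :
    pd k (fun y => bracket c (fun ρ => F ρ y) (fun ρ => G ρ y) τ) x =
      bracket c (fun ρ => pd k (F ρ) x) (fun ρ => G ρ x) τ +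
        bracket c (fun ρ => F ρ x) (fun ρ => pd k (G ρ) x) τ := by
  simp only [bracket_apply, ← Finset.sum_add_distrib]
  rw [pd_fun_sum fun ρ _ => .fun_sum fun σ _ => ((hF ρ).const_mul _).fun_mul (hG σ)]
  refine Finset.sum_congr rfl fun ρ _ => ?_
  rw [pd_fun_sum fun σ _ => ((hF ρ).const_mul _).fun_mul (hG σ)]
  exact Finset.sum_congr rfl fun σ _ => pd_const_mul_mul _ (hF ρ) (hG σ)

end Bracket

lemma cyclic_sum_pd_bracket_eq_zero {n : ℕ} {ω : Fin n → Fin n → (Fin n → ℝ) → ℝ}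
    {c : Fin n → Fin n → Fin n → ℝ} {x : Fin n → ℝ} (hω : ∀ τ i, ContDiffAt ℝ 2 (ω τ i) x)
    (hMC : ∀ᶠ y in 𝓝 x, ∀ τ i j, pd i (ω τ j) y - pd j (ω τ i) y =
      bracket c (fun ρ => ω ρ i y) (fun ρ => ω ρ j y) τ) (τ i j k : Fin n) :
    pd k (fun y => bracket c (fun ρ => ω ρ i y) (fun ρ => ω ρ j y) τ) x
      + pd i (fun y => bracket c (fun ρ => ω ρ j y) (fun ρ => ω ρ k y) τ) x
      + pd j (fun y => bracket c (fun ρ => ω ρ k y) (fun ρ => ω ρ i y) τ) x = 0 := by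
  have hcurl : ∀ a b l, pd l (fun y => bracket c (fun ρ => ω ρ a y) (fun ρ => ω ρ b y) τ) x
      = pd l (fun y => pd a (ω τ b) y - pd b (ω τ a) y) x := fun a b l =>
    pd_congr_of_eventuallyEq (hMC.mono fun y hy => (hy τ a b).symm)
  rw [hcurl, hcurl, hcurl]
  exact pd_curl_cyclic_sum (hω τ)

lemma jacobiator_bracket_coframe_eq_zero {n : ℕ} {ω : Fin n → Fin n → (Fin n → ℝ) → ℝ}
    {c : Fin n → Fin n → Fin n → ℝ} {x : Fin n → ℝ} (hc : ∀ τ ρ σ, c τ ρ σ = -c τ σ ρ)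
    (hω : ∀ τ i, ContDiffAt ℝ 2 (ω τ i) x)
    (hMC : ∀ᶠ y in 𝓝 x, ∀ τ i j, pd i (ω τ j) y - pd j (ω τ i) y =
      bracket c (fun ρ => ω ρ i y) (fun ρ => ω ρ j y) τ) (i j k : Fin n) :
    jacobiator (bracket c) (fun ρ => ω ρ i x) (fun ρ => ω ρ j x) (fun ρ => ω ρ k x) = 0 := by
  have hd : ∀ τ i, DifferentiableAt ℝ (ω τ i) x := fun τ i =>
    (hω τ i).differentiableAt two_ne_zero
  rw [jacobiator_eq_cyclic_sum_leibniz _ (bracket_skew hc) (fun i ρ => ω ρ i x)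
    (fun k i ρ => pd k (ω ρ i) x) (fun i j => funext fun τ => hMC.self_of_nhds τ i j)]
  funext τ
  have h := cyclic_sum_pd_bracket_eq_zero hω hMC τ i j k
  rw [pd_bracket (hd · i) (hd · j), pd_bracket (hd · j) (hd · k),
    pd_bracket (hd · k) (hd · i)] at h
  simpa only [Pi.add_apply, Pi.zero_apply] using h

theorem maurer_cartan_implies_jacobi_general {n : ℕ}
    (U : Set (Fin n → ℝ)) (hUopen : IsOpen U) (hUne : U.Nonempty)
    (ω : Fin n → Fin n → (Fin n → ℝ) → ℝ)
    (hω : ∀ τ i, ContDiffOn ℝ 2 (ω τ i) U)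
    (hωinv : ∀ x ∈ U, IsUnit (Matrix.of fun τ i => ω τ i x))
    (c : Fin n → Fin n → Fin n → ℝ)
    (hcskew : ∀ τ ρ σ, c τ ρ σ = -c τ σ ρ)
    (hMC : ∀ x ∈ U, ∀ τ i j,
      pd i (ω τ j) x - pd j (ω τ i) x = ∑ ρ, ∑ σ, c τ ρ σ * ω ρ i x * ω σ j x) :
    ∀ lam ρ σ τ : Fin n,
      ∑ μ, (c lam μ ρ * c μ σ τ + c lam μ σ * c μ τ ρ + c lam μ τ * c μ ρ σ) = 0 := by
  intro lam ρ σ τ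
  obtain ⟨x, hx⟩ := hUne
  have hJ := jacobiator_bracket_coframe_eq_zero hcskew
    (fun τ i => (hω τ i).contDiffAt (hUopen.mem_nhds hx))
    (eventually_of_mem (hUopen.mem_nhds hx) hMC)
  have hspan : Submodule.span ℝ (Set.range fun i ρ => ω ρ i x) = ⊤ :=
    (Matrix.linearIndependent_cols_iff_isUnit.mpr (hωinv x hx)).span_eq_top_of_card_eq_finrank'
      (by simp)
  rw [← jacobiator_bracket_single, jacobiator_eq_zero_of_span_eq_top _ hspan hJ]
  rfl

/-- Example 1.1, closure of the Vessiot/Maurer–Cartan equations: if a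
coframe `ω` (a `C²` field of invertible matrices) on a nonempty open set `U ⊆ ℝⁿ` satisfies
the Maurer–Cartan (Vessiot) structure equations with skew-symmetric structure constants `c`,
then `c` satisfies the quadratic Jacobi relations. -/
theorem maurer_cartan_implies_jacobi {n : ℕ} (hn : 1 ≤ n)
    (U : Set (Fin n → ℝ)) (hUopen : IsOpen U) (hUne : U.Nonempty)
    (ω : Fin n → Fin n → (Fin n → ℝ) → ℝ)
    (hω : ∀ τ i, ContDiffOn ℝ 2 (ω τ i) U)
    (hωinv : ∀ x ∈ U, IsUnit (Matrix.of fun τ i => ω τ i x))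
    (c : Fin n → Fin n → Fin n → ℝ)
    (hcskew : ∀ τ ρ σ, c τ ρ σ = -c τ σ ρ)
    (hMC : ∀ x ∈ U, ∀ τ i j,
      pd i (ω τ j) x - pd j (ω τ i) x = ∑ ρ, ∑ σ, c τ ρ σ * ω ρ i x * ω σ j x) :
    ∀ lam ρ σ τ : Fin n,
      ∑ μ, (c lam μ ρ * c μ σ τ + c lam μ σ * c μ τ ρ + c lam μ τ * c μ ρ σ) = 0 :=
  maurer_cartan_implies_jacobi_general U hUopen hUne ω hω hωinv c hcskew hMC
end

section
/- (Example 1.4, Jacobi condition) Let U ⊆ ℝ³ be a nonempty open set, let a₁, a₂, a₃ be C² functions and b¹, b², b³ be C¹ functions on U with p := a₁b¹ + a₂b² + a₃b³ nonvanishing on U (i.e. α∧β ≠ 0), and let c′, c″ ∈ ℝ be such that the Vessiot structure equations dα = c′β and dβ = c″ α∧β hold on U, i.e. ∂₂a₃ − ∂₃a₂ = c′b¹, ∂₃a₁ − ∂₁a₃ = c′b², ∂₁a₂ − ∂₂a₁ = c′b³, and ∂₁b¹ + ∂₂b² + ∂₃b³ = c″·p. Then the purely algebraic Jacobi condition c′·c″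 = 0 holds. -/
open Filter Topology

namespace VessiotJacobi

variable {n : ℕ}

noncomputable def divergence (b : Fin n → (Fin n → ℝ) → ℝ) (x : Fin n → ℝ) : ℝ :=
  ∑ i, pd i (b i) x

/-- The components of `dα` for a 1-form `α` on `ℝ³`, in the basis `dx² ∧ dx³, dx³ ∧ dx¹, dx¹ ∧ dx²`. -/
noncomputable def curl (a : Fin 3 → (Fin 3 → ℝ) → ℝ) : Fin 3 → (Fin 3 → ℝ) → ℝ :=
  ![fun y => pd 1 (a 2) y - pd 2 (a 1) y,
    fun y => pd 2 (a 0) y - pd 0 (a 2) y,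
    fun y => pd 0 (a 1) y - pd 1 (a 0) y]

lemma pd_congr_of_eventuallyEq {f g : (Fin n → ℝ) → ℝ} {x : Fin n → ℝ} (h : f =ᶠ[𝓝 x] g)
    (i : Fin n) : pd i f x = pd i g x := by
  rw [pd, pd, h.fderiv_eq]

lemma pd_const_mul (f : (Fin n → ℝ) → ℝ) (x : Fin n → ℝ) (c : ℝ) (i : Fin n) :
    pd i (fun y => c * f y) x = c * pd i f x := by
  change fderiv ℝ (c • f) x _ = _
  rw [fderiv_const_smul_field]
  rfl

lemma pd_sub {f g : (Fin n → ℝ) → ℝ} {x : Fin n → ℝ}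
    (hf : DifferentiableAt ℝ f x) (hg : DifferentiableAt ℝ g x) (i : Fin n) :
    pd i (fun y => f y - g y) x = pd i f x - pd i g x := by
  rw [pd, fderiv_fun_sub hf hg]
  rfl

lemma differentiableAt_fderiv_of_contDiffAt_two {f : (Fin n → ℝ) → ℝ} {x : Fin n → ℝ}
    (hf : ContDiffAt ℝ 2 f x) : DifferentiableAt ℝ (fderiv ℝ f) x :=
  (hf.fderiv_right (m := 1) (by norm_num)).differentiableAt one_ne_zero

lemma differentiableAt_pd {f : (Fin n → ℝ) → ℝ} {x : Fin n → ℝ}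
    (hf : ContDiffAt ℝ 2 f x) (j : Fin n) : DifferentiableAt ℝ (pd j f) x :=
  (differentiableAt_fderiv_of_contDiffAt_two hf).clm_apply (differentiableAt_const _)

lemma pd_pd_eq_fderiv_fderiv {f : (Fin n → ℝ) → ℝ} {x : Fin n → ℝ}
    (hf : ContDiffAt ℝ 2 f x) (i j : Fin n) :
    pd i (pd j f) x = fderiv ℝ (fderiv ℝ f) x (Pi.single i 1) (Pi.single j 1) := by
  change fderiv ℝ (fun y => fderiv ℝ f y (Pi.single j 1)) x _ = _
  rw [fderiv_clm_apply (differentiableAt_fderiv_of_contDiffAt_two hf) (differentiableAt_const _)]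
  simp

lemma pd_pd_comm {f : (Fin n → ℝ) → ℝ} {x : Fin n → ℝ}
    (hf : ContDiffAt ℝ 2 f x) (i j : Fin n) :
    pd i (pd j f) x = pd j (pd i f) x := by
  rw [pd_pd_eq_fderiv_fderiv hf, pd_pd_eq_fderiv_fderiv hf]
  exact hf.isSymmSndFDerivAt (by simp) _ _

lemma divergence_congr_of_eventuallyEq {b b' : Fin n → (Fin n → ℝ) → ℝ} {x : Fin n → ℝ}
    (h : ∀ i, b i =ᶠ[𝓝 x] b' i) : divergence b x = divergence b' x :=
  Finset.sum_congr rfl fun i _ => pd_congr_of_eventuallyEq (h i) i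

lemma divergence_const_mul (b : Fin n → (Fin n → ℝ) → ℝ) (x : Fin n → ℝ) (c : ℝ) :
    divergence (fun i y => c * b i y) x = c * divergence b x := by
  simp only [divergence, pd_const_mul, Finset.mul_sum]

lemma divergence_curl {a : Fin 3 → (Fin 3 → ℝ) → ℝ} {x : Fin 3 → ℝ}
    (ha : ∀ i, ContDiffAt ℝ 2 (a i) x) : divergence (curl a) x = 0 := by
  have hd := fun i j => differentiableAt_pd (ha i) j
  simp only [divergence, curl, Fin.sum_univ_three, Matrix.cons_val_zero, Matrix.cons_val_one,
    Matrix.cons_val_two, Matrix.head_cons, Matrix.tail_cons]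
  rw [pd_sub (hd 2 1) (hd 1 2), pd_sub (hd 0 2) (hd 2 0), pd_sub (hd 1 0) (hd 0 1),
    pd_pd_comm (ha 0) 1 2, pd_pd_comm (ha 1) 2 0, pd_pd_comm (ha 2) 0 1]
  ring

end VessiotJacobi

open VessiotJacobi in
theorem unimodular_contact_jacobi_condition_general
    (U : Set (Fin 3 → ℝ)) (hUopen : IsOpen U) (hUne : U.Nonempty)
    (a b : Fin 3 → (Fin 3 → ℝ) → ℝ)
    (ha : ∀ i, ContDiffOn ℝ 2 (a i) U)
    (hp : ∀ y ∈ U, (∑ i, a i y * b i y) ≠ 0)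
    (c' c'' : ℝ)
    (e1 : ∀ y ∈ U, pd 1 (a 2) y - pd 2 (a 1) y = c' * b 0 y)
    (e2 : ∀ y ∈ U, pd 2 (a 0) y - pd 0 (a 2) y = c' * b 1 y)
    (e3 : ∀ y ∈ U, pd 0 (a 1) y - pd 1 (a 0) y = c' * b 2 y)
    (e4 : ∀ y ∈ U, pd 0 (b 0) y + pd 1 (b 1) y + pd 2 (b 2) y = c'' * ∑ i, a i y * b i y) :
    c' * c'' = 0 := by
  obtain ⟨x, hx⟩ := hUne
  have hU : U ∈ 𝓝 x := hUopen.mem_nhds hx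
  have hcurl : ∀ i, curl a i =ᶠ[𝓝 x] fun y => c' * b i y := by
    intro i
    filter_upwards [hU] with y hy
    fin_cases i
    exacts [e1 y hy, e2 y hy, e3 y hy]
  have hdiv : c' * divergence b x = 0 := by
    rw [← divergence_const_mul, ← divergence_congr_of_eventuallyEq hcurl,
      divergence_curl fun i => (ha i).contDiffAt hU]
  have hdiv_b : divergence b x = c'' * ∑ i, a i x * b i x := by
    rw [divergence, Fin.sum_univ_three, e4 x hx]
  rw [hdiv_b, ← mul_assoc] at hdiv
  exact (mul_eq_zero.mp hdiv).resolve_right (hp x hx)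

/-- Example 1.4, Jacobi condition: on a nonempty open set `U ⊆ ℝ³`, let
`α = (a 0, a 1, a 2)` be a `C²` 1-form and `β` a `C¹` 2-form with components
`(b 0, b 1, b 2)` such that `p = a₁b¹ + a₂b² + a₃b³` is nonvanishing (`α∧β ≠ 0`), and let
`c', c'' ∈ ℝ` be such that the Vessiot structure equations `dα = c'β` and `dβ = c'' α∧β`
hold on `U`.  Then the purely algebraic Jacobi condition `c' · c'' = 0` holds. -/
theorem unimodular_contact_jacobi_condition
    (U : Set (Fin 3 → ℝ)) (hUopen : IsOpen U) (hUne : U.Nonempty)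
    (a b : Fin 3 → (Fin 3 → ℝ) → ℝ)
    (ha : ∀ i, ContDiffOn ℝ 2 (a i) U)
    (hb : ∀ i, ContDiffOn ℝ 1 (b i) U)
    (hp : ∀ y ∈ U, (∑ i, a i y * b i y) ≠ 0)
    (c' c'' : ℝ)
    (e1 : ∀ y ∈ U, pd 1 (a 2) y - pd 2 (a 1) y = c' * b 0 y)
    (e2 : ∀ y ∈ U, pd 2 (a 0) y - pd 0 (a 2) y = c' * b 1 y)
    (e3 : ∀ y ∈ U, pd 0 (a 1) y - pd 1 (a 0) y = c' * b 2 y)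
    (e4 : ∀ y ∈ U, pd 0 (b 0) y + pd 1 (b 1) y + pd 2 (b 2) y = c'' * ∑ i, a i y * b i y) :
    c' * c'' = 0 :=
  unimodular_contact_jacobi_condition_general U hUopen hUne a b ha hp c' c'' e1 e2 e3 e4
end

section
/- (Example 6.2, proportionality of metrics with the same isotropy) Let ω be a nondegenerate symmetric bilinear form on V and let ω̄ be any symmetric bilinear form on V such that every ω-skew endomorphism of V is also ω̄-skew. Then there exists a real number a with ω̄ = a·ω; i.e. two metrics defining the same isotropy Lie algebra R⁰₁ (first-order Killing equations) are proportional. -/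
/-- Example 6.2: if `ω` is a nondegenerate symmetric bilinear form on a
finite-dimensional real vector space `V` and `ωb` is a symmetric bilinear form such that
every `ω`-skew endomorphism of `V` is also `ωb`-skew, then `ωb = a • ω` for some `a : ℝ`;
i.e. two metrics defining the same isotropy Lie algebra `R⁰₁` are proportional. -/
theorem metrics_with_same_isotropy_are_proportional
    {V : Type*} [AddCommGroup V] [Module ℝ V] [FiniteDimensional ℝ V]
    (ω ωb : V →ₗ[ℝ] V →ₗ[ℝ] ℝ)
    (hsym : ∀ X Y : V, ω X Y = ω Y X)
    (hnd : ∀ X : V, (∀ Y : V, ω X Y = 0) → X = 0)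
    (hsymb : ∀ X Y : V, ωb X Y = ωb Y X)
    (hskew : ∀ A : V →ₗ[ℝ] V, (∀ X Y : V, ω (A X) Y + ω X (A Y) = 0) →
      ∀ X Y : V, ωb (A X) Y + ωb X (A Y) = 0) :
    ∃ a : ℝ, ωb = a • ω := by
  -- Key identity: for all u v, ω u u * ωb v v = ω v v * ωb u u
  have key : ∀ u v : V, ω u u * ωb v v = ω v v * ωb u u := by
    intro u v
    set A : V →ₗ[ℝ] V := (ω u).smulRight v - (ω v).smulRight u with hA
    have hAx : ∀ X : V, A X = ω u X • v - ω v X • u := by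
      intro X; simp [hA]
    have hAskew : ∀ X Y : V, ω (A X) Y + ω X (A Y) = 0 := by
      intro X Y
      rw [hAx, hAx]
      simp only [map_sub, map_smul, LinearMap.sub_apply, LinearMap.smul_apply,
        smul_eq_mul]
      rw [hsym v X, hsym u X, hsym X v, hsym X u]
      ring
    have := hskew A hAskew u v
    rw [hAx, hAx] at this
    simp only [map_sub, map_smul, LinearMap.sub_apply, LinearMap.smul_apply,
      smul_eq_mul] at this
    rw [hsym v u] at this
    linarith [this]
  by_cases h : ∃ u : V, ω u u ≠ 0
  · obtain ⟨u, hu⟩ := h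
    refine ⟨ωb u u / ω u u, ?_⟩
    have hdiag : ∀ v : V, ωb v v = (ωb u u / ω u u) * ω v v := by
      intro v
      have := key u v
      field_simp
      linarith [this]
    ext X Y
    have h1 := hdiag (X + Y)
    have h2 := hdiag X
    have h3 := hdiag Y
    simp only [map_add, LinearMap.add_apply] at h1
    rw [hsymb Y X] at h1
    rw [hsym Y X] at h1
    simp only [LinearMap.smul_apply, smul_eq_mul]
    nlinarith [h1, h2, h3]
  · push_neg at h
    -- then ω = 0, so V = 0
    have hzero : ∀ X Y : V, ω X Y = 0 := by
      intro X Y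
      have := h (X + Y)
      simp only [map_add, LinearMap.add_apply] at this
      rw [h X, h Y, hsym Y X] at this
      linarith
    have hV : ∀ X : V, X = 0 := fun X => hnd X (hzero X)
    refine ⟨0, ?_⟩
    ext X Y
    rw [hV X]
    simp
end

section
/- (Example 5.1 / Corollary 5.11 at order one) The bracket on smooth sections of J₁(T) over U satisfies the Jacobi identity: for any smooth sections (ξ,ξ₁), (η,η₁), (ζ,ζ₁) of J₁(T) over U, the cyclic sum [(ξ,ξ₁),[(η,η₁),(ζ,ζ₁)]] + [(η,η₁),[(ζ,ζ₁),(ξ,ξ₁)]] + [(ζ,ζ₁),[(ξ,ξ₁),(η,η₁)]] vanishes identically on U, in both the vector-field components and the matrix components. -/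
/-- Vector-field component of the bracket of two sections of `J₁(T)`:
`[ξ,η]^k = ξ^r ∂_r η^k − η^s ∂_s ξ^k`. -/
noncomputable def brkVec {n : ℕ} (ξ η : (Fin n → ℝ) → Fin n → ℝ) :
    (Fin n → ℝ) → Fin n → ℝ :=
  fun x k => (∑ r, ξ x r * pd r (fun y => η y k) x) - ∑ s, η x s * pd s (fun y => ξ y k) x

/-- Matrix component of the bracket of two sections `(ξ,ξ₁)`, `(η,η₁)` of `J₁(T)`:
`[ξ₁,η₁]^k_i = ξ^r ∂_r η^k_i + ξ^r_i η^k_r − η^s_i ξ^k_s − η^s ∂_s ξ^k_i`. -/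
noncomputable def brkMat {n : ℕ} (ξ η : (Fin n → ℝ) → Fin n → ℝ)
    (ξ₁ η₁ : (Fin n → ℝ) → Fin n → Fin n → ℝ) :
    (Fin n → ℝ) → Fin n → Fin n → ℝ :=
  fun x k i => (∑ r, ξ x r * pd r (fun y => η₁ y k i) x) + (∑ r, ξ₁ x r i * η₁ x k r) -
    (∑ s, η₁ x s i * ξ₁ x k s) - ∑ s, η x s * pd s (fun y => ξ₁ y k i) x

section Helpers

variable {n : ℕ} {f g : (Fin n → ℝ) → ℝ} {x : Fin n → ℝ}

lemma pd_add (hf : DifferentiableAt ℝ f x) (hg : DifferentiableAt ℝ g x) (i : Fin n) :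
    pd i (fun y => f y + g y) x = pd i f x + pd i g x := by
  unfold pd; rw [fderiv_fun_add hf hg]; rfl

lemma pd_sub (hf : DifferentiableAt ℝ f x) (hg : DifferentiableAt ℝ g x) (i : Fin n) :
    pd i (fun y => f y - g y) x = pd i f x - pd i g x := by
  unfold pd; rw [fderiv_fun_sub hf hg]; rfl

lemma pd_mul (hf : DifferentiableAt ℝ f x) (hg : DifferentiableAt ℝ g x) (i : Fin n) :
    pd i (fun y => f y * g y) x = pd i f x * g x + f x * pd i g x := by
  unfold pd; rw [fderiv_fun_mul hf hg]; simp; ring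

lemma pd_sum {m : ℕ} (F : Fin m → (Fin n → ℝ) → ℝ)
    (h : ∀ j, DifferentiableAt ℝ (F j) x) (i : Fin n) :
    pd i (fun y => ∑ j, F j y) x = ∑ j, pd i (F j) x := by
  unfold pd; rw [fderiv_fun_sum (fun j _ => h j)]; simp

lemma pd_contDiffAt (hf : ContDiffAt ℝ (⊤ : ℕ∞) f x) (i : Fin n) :
    ContDiffAt ℝ (⊤ : ℕ∞) (fun y => pd i f y) x := by
  unfold pd
  exact (hf.fderiv_right (by simp)).clm_apply contDiffAt_const

lemma pd_differentiableAt (hf : ContDiffAt ℝ (⊤ : ℕ∞) f x) (i : Fin n) :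
    DifferentiableAt ℝ (fun y => pd i f y) x :=
  (pd_contDiffAt hf i).differentiableAt (by simp)

lemma pd2_comm (hf : ContDiffAt ℝ (⊤ : ℕ∞) f x) (i j : Fin n) :
    pd i (fun y => pd j f y) x = pd j (fun y => pd i f y) x := by
  have hd : DifferentiableAt ℝ (fderiv ℝ f) x :=
    ((hf.fderiv_right (m := 1) (WithTop.coe_le_coe.mpr le_top)).differentiableAt (by simp))
  have h1 : ∀ u v : Fin n, pd u (fun y => pd v f y) x
      = fderiv ℝ (fderiv ℝ f) x (Pi.single u 1) (Pi.single v 1) := by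
    intro u v
    show fderiv ℝ (fun y => (fderiv ℝ f y) (Pi.single v 1)) x (Pi.single u 1) = _
    rw [fderiv_clm_apply hd (differentiableAt_const _)]
    simp
  rw [h1, h1]
  exact (hf.isSymmSndFDerivAt (by simp only [minSmoothness_of_isRCLikeNormedField]; exact WithTop.coe_le_coe.mpr le_top)) _ _

lemma sum_antisymm (F : Fin n → Fin n → ℝ) (h : ∀ r s, F r s + F s r = 0) :
    ∑ r, ∑ s, F r s = 0 := by
  have h3 : ∑ r, ∑ s, F s r = ∑ r, ∑ s, F r s := Finset.sum_comm
  have h2 : (∑ r, ∑ s, F r s) + (∑ r, ∑ s, F s r) = 0 := by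
    rw [← Finset.sum_add_distrib]
    simp only [← Finset.sum_add_distrib]
    simp [h]
  linarith

end Helpers

section Expand

variable {n : ℕ}

lemma pd_brkVec' (p q : (Fin n → ℝ) → Fin n → ℝ) (x : Fin n → ℝ)
    (hp : ∀ m, ContDiffAt ℝ (⊤ : ℕ∞) (fun y => p y m) x)
    (hq : ∀ m, ContDiffAt ℝ (⊤ : ℕ∞) (fun y => q y m) x) (r k : Fin n) :
    pd r (fun y => (∑ u, p y u * pd u (fun y' => q y' k) y)
        - ∑ u, q y u * pd u (fun y' => p y' k) y) x
    = (∑ s, (pd r (fun y => p y s) x * pd s (fun y => q y k) x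
        + p x s * pd r (fun y => pd s (fun y' => q y' k) y) x))
      - ∑ s, (pd r (fun y => q y s) x * pd s (fun y => p y k) x
        + q x s * pd r (fun y => pd s (fun y' => p y' k) y) x) := by
  have Dp : ∀ m, DifferentiableAt ℝ (fun y => p y m) x :=
    fun m => (hp m).differentiableAt (by simp)
  have Dq : ∀ m, DifferentiableAt ℝ (fun y => q y m) x :=
    fun m => (hq m).differentiableAt (by simp)
  have D1 : ∀ u : Fin n, DifferentiableAt ℝ
      (fun y => p y u * pd u (fun y' => q y' k) y) x :=
    fun u => (Dp u).mul (pd_differentiableAt (hq k) u)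
  have D2 : ∀ u : Fin n, DifferentiableAt ℝ
      (fun y => q y u * pd u (fun y' => p y' k) y) x :=
    fun u => (Dq u).mul (pd_differentiableAt (hp k) u)
  rw [pd_sub (DifferentiableAt.fun_sum fun u _ => D1 u)
      (DifferentiableAt.fun_sum fun u _ => D2 u), pd_sum _ D1, pd_sum _ D2]
  exact congrArg₂ (· - ·)
    (Finset.sum_congr rfl fun s _ => pd_mul (Dp s) (pd_differentiableAt (hq k) s) r)
    (Finset.sum_congr rfl fun s _ => pd_mul (Dq s) (pd_differentiableAt (hp k) s) r)

lemma pd_brkMat' (p q : (Fin n → ℝ) → Fin n → ℝ)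
    (p1 q1 : (Fin n → ℝ) → Fin n → Fin n → ℝ) (x : Fin n → ℝ)
    (hp : ∀ m, ContDiffAt ℝ (⊤ : ℕ∞) (fun y => p y m) x)
    (hq : ∀ m, ContDiffAt ℝ (⊤ : ℕ∞) (fun y => q y m) x)
    (hp1 : ∀ m j, ContDiffAt ℝ (⊤ : ℕ∞) (fun y => p1 y m j) x)
    (hq1 : ∀ m j, ContDiffAt ℝ (⊤ : ℕ∞) (fun y => q1 y m j) x)
    (r k i : Fin n) :
    pd r (fun y => (∑ u, p y u * pd u (fun y' => q1 y' k i) y)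
        + (∑ u, p1 y u i * q1 y k u) - (∑ u, q1 y u i * p1 y k u)
        - ∑ u, q y u * pd u (fun y' => p1 y' k i) y) x
    = (∑ s, (pd r (fun y => p y s) x * pd s (fun y => q1 y k i) x
          + p x s * pd r (fun y => pd s (fun y' => q1 y' k i) y) x))
      + (∑ s, (pd r (fun y => p1 y s i) x * q1 x k s
          + p1 x s i * pd r (fun y => q1 y k s) x))
      - (∑ s, (pd r (fun y => q1 y s i) x * p1 x k s
          + q1 x s i * pd r (fun y => p1 y k s) x))
      - ∑ s, (pd r (fun y => q y s) x * pd s (fun y => p1 y k i) x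
          + q x s * pd r (fun y => pd s (fun y' => p1 y' k i) y) x) := by
  have Dp : ∀ m, DifferentiableAt ℝ (fun y => p y m) x :=
    fun m => (hp m).differentiableAt (by simp)
  have Dq : ∀ m, DifferentiableAt ℝ (fun y => q y m) x :=
    fun m => (hq m).differentiableAt (by simp)
  have Dp1 : ∀ m j, DifferentiableAt ℝ (fun y => p1 y m j) x :=
    fun m j => (hp1 m j).differentiableAt (by simp)
  have Dq1 : ∀ m j, DifferentiableAt ℝ (fun y => q1 y m j) x :=
    fun m j => (hq1 m j).differentiableAt (by simp)
  have D1 : ∀ u : Fin n, DifferentiableAt ℝ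
      (fun y => p y u * pd u (fun y' => q1 y' k i) y) x :=
    fun u => (Dp u).mul (pd_differentiableAt (hq1 k i) u)
  have D2 : ∀ u : Fin n, DifferentiableAt ℝ (fun y => p1 y u i * q1 y k u) x :=
    fun u => (Dp1 u i).mul (Dq1 k u)
  have D3 : ∀ u : Fin n, DifferentiableAt ℝ (fun y => q1 y u i * p1 y k u) x :=
    fun u => (Dq1 u i).mul (Dp1 k u)
  have D4 : ∀ u : Fin n, DifferentiableAt ℝ
      (fun y => q y u * pd u (fun y' => p1 y' k i) y) x :=
    fun u => (Dq u).mul (pd_differentiableAt (hp1 k i) u)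
  have S1 : DifferentiableAt ℝ (fun y => ∑ u, p y u * pd u (fun y' => q1 y' k i) y) x :=
    DifferentiableAt.fun_sum fun u _ => D1 u
  have S2 : DifferentiableAt ℝ (fun y => ∑ u, p1 y u i * q1 y k u) x :=
    DifferentiableAt.fun_sum fun u _ => D2 u
  have S3 : DifferentiableAt ℝ (fun y => ∑ u, q1 y u i * p1 y k u) x :=
    DifferentiableAt.fun_sum fun u _ => D3 u
  have S4 : DifferentiableAt ℝ (fun y => ∑ u, q y u * pd u (fun y' => p1 y' k i) y) x :=
    DifferentiableAt.fun_sum fun u _ => D4 u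
  rw [pd_sub ((S1.fun_add S2).fun_sub S3) S4, pd_sub (S1.fun_add S2) S3, pd_add S1 S2,
    pd_sum _ D1, pd_sum _ D2, pd_sum _ D3, pd_sum _ D4]
  refine congrArg₂ (· - ·) (congrArg₂ (· - ·) (congrArg₂ (· + ·) ?_ ?_) ?_) ?_
  · exact Finset.sum_congr rfl fun s _ =>
      pd_mul (Dp s) (pd_differentiableAt (hq1 k i) s) r
  · exact Finset.sum_congr rfl fun s _ => pd_mul (Dp1 s i) (Dq1 k s) r
  · exact Finset.sum_congr rfl fun s _ => pd_mul (Dq1 s i) (Dp1 k s) r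
  · exact Finset.sum_congr rfl fun s _ =>
      pd_mul (Dq s) (pd_differentiableAt (hp1 k i) s) r

end Expand

section Alg

variable {n : ℕ}

lemma hA2 (u : Fin n → ℝ) (P Q : Fin n → Fin n → ℝ) :
    (∑ r, u r * ((∑ s, P r s) - ∑ s, Q r s))
      = ∑ r, ∑ s, (u r * P r s - u r * Q r s) := by
  refine Finset.sum_congr rfl fun r _ => ?_
  rw [← Finset.sum_sub_distrib, Finset.mul_sum]
  exact Finset.sum_congr rfl fun s _ => by ring

lemma hB2 (u : Fin n → ℝ) (P Q : Fin n → Fin n → ℝ) :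
    (∑ s, ((∑ r, P r s) - ∑ r, Q r s) * u s)
      = ∑ r, ∑ s, ((P r s - Q r s) * u s) := by
  rw [show (∑ s, ((∑ r, P r s) - ∑ r, Q r s) * u s)
      = ∑ s, ∑ r, (P r s - Q r s) * u s from
    Finset.sum_congr rfl fun s _ => by rw [← Finset.sum_sub_distrib, Finset.sum_mul]]
  exact Finset.sum_comm

lemma hA4 (u : Fin n → ℝ) (P Q R S : Fin n → Fin n → ℝ) :
    (∑ r, u r * ((∑ s, P r s) + (∑ s, Q r s) - (∑ s, R r s) - ∑ s, S r s))
      = ∑ r, ∑ s, (u r * P r s + u r * Q r s - u r * R r s - u r * S r s) := by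
  refine Finset.sum_congr rfl fun r _ => ?_
  rw [← Finset.sum_add_distrib, ← Finset.sum_sub_distrib, ← Finset.sum_sub_distrib,
    Finset.mul_sum]
  exact Finset.sum_congr rfl fun s _ => by ring

lemma hB4 (u : Fin n → ℝ) (P Q R S : Fin n → Fin n → ℝ) :
    (∑ s, ((∑ r, P r s) + (∑ r, Q r s) - (∑ r, R r s) - ∑ r, S r s) * u s)
      = ∑ r, ∑ s, ((P r s + Q r s - R r s - S r s) * u s) := by
  rw [show (∑ s, ((∑ r, P r s) + (∑ r, Q r s) - (∑ r, R r s) - ∑ r, S r s) * u s)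
      = ∑ s, ∑ r, (P r s + Q r s - R r s - S r s) * u s from
    Finset.sum_congr rfl fun s _ => by
      rw [← Finset.sum_add_distrib, ← Finset.sum_sub_distrib, ← Finset.sum_sub_distrib,
        Finset.sum_mul]]
  exact Finset.sum_comm

lemma jacobi_vec_alg (k : Fin n)
    (a b c : Fin n → ℝ) (da db dc : Fin n → Fin n → ℝ)
    (dda ddb ddc : Fin n → Fin n → Fin n → ℝ)
    (sa : ∀ r s m, dda r s m = dda s r m)
    (sb : ∀ r s m, ddb r s m = ddb s r m)
    (sc : ∀ r s m, ddc r s m = ddc s r m) :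
    ((∑ r, a r * ((∑ s, (db r s * dc s k + b s * ddc r s k))
        - ∑ s, (dc r s * db s k + c s * ddb r s k)))
      - ∑ s, ((∑ r, b r * dc r s) - ∑ r, c r * db r s) * da s k)
    + ((∑ r, b r * ((∑ s, (dc r s * da s k + c s * dda r s k))
        - ∑ s, (da r s * dc s k + a s * ddc r s k)))
      - ∑ s, ((∑ r, c r * da r s) - ∑ r, a r * dc r s) * db s k)
    + ((∑ r, c r * ((∑ s, (da r s * db s k + a s * ddb r s k))
        - ∑ s, (db r s * da s k + b s * dda r s k)))
      - ∑ s, ((∑ r, a r * db r s) - ∑ r, b r * da r s) * dc s k) = 0 := by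
  rw [hA2, hA2, hA2, hB2, hB2, hB2]
  simp only [← Finset.sum_sub_distrib, ← Finset.sum_add_distrib]
  apply sum_antisymm
  intro r s
  simp only [sa s r, sb s r, sc s r]
  ring

end Alg

lemma jacobi_mat_alg {n : ℕ} (k i : Fin n)
    (a b c : Fin n → ℝ) (a1 b1 c1 : Fin n → Fin n → ℝ)
    (da db dc : Fin n → Fin n → ℝ)
    (da1 db1 dc1 : Fin n → Fin n → Fin n → ℝ)
    (dda1 ddb1 ddc1 : Fin n → Fin n → Fin n → Fin n → ℝ)
    (sa1 : ∀ r s m j, dda1 r s m j = dda1 s r m j)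
    (sb1 : ∀ r s m j, ddb1 r s m j = ddb1 s r m j)
    (sc1 : ∀ r s m j, ddc1 r s m j = ddc1 s r m j) :
    ((∑ r, a r * ((∑ s, (db r s * dc1 s k i + b s * ddc1 r s k i))
        + (∑ s, (db1 r s i * c1 k s + b1 s i * dc1 r k s))
        - (∑ s, (dc1 r s i * b1 k s + c1 s i * db1 r k s))
        - ∑ s, (dc r s * db1 s k i + c s * ddb1 r s k i)))
      + (∑ r, a1 r i * ((∑ s, b s * dc1 s k r) + (∑ s, b1 s r * c1 k s)
        - (∑ s, c1 s r * b1 k s) - ∑ s, c s * db1 s k r))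
      - (∑ s, ((∑ r, b r * dc1 r s i) + (∑ r, b1 r i * c1 s r)
        - (∑ r, c1 r i * b1 s r) - ∑ r, c r * db1 r s i) * a1 k s)
      - ∑ s, ((∑ r, b r * dc r s) - ∑ r, c r * db r s) * da1 s k i)
    + ((∑ r, b r * ((∑ s, (dc r s * da1 s k i + c s * dda1 r s k i))
        + (∑ s, (dc1 r s i * a1 k s + c1 s i * da1 r k s))
        - (∑ s, (da1 r s i * c1 k s + a1 s i * dc1 r k s))
        - ∑ s, (da r s * dc1 s k i + a s * ddc1 r s k i)))
      + (∑ r, b1 r i * ((∑ s, c s * da1 s k r) + (∑ s, c1 s r * a1 k s)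
        - (∑ s, a1 s r * c1 k s) - ∑ s, a s * dc1 s k r))
      - (∑ s, ((∑ r, c r * da1 r s i) + (∑ r, c1 r i * a1 s r)
        - (∑ r, a1 r i * c1 s r) - ∑ r, a r * dc1 r s i) * b1 k s)
      - ∑ s, ((∑ r, c r * da r s) - ∑ r, a r * dc r s) * db1 s k i)
    + ((∑ r, c r * ((∑ s, (da r s * db1 s k i + a s * ddb1 r s k i))
        + (∑ s, (da1 r s i * b1 k s + a1 s i * db1 r k s))
        - (∑ s, (db1 r s i * a1 k s + b1 s i * da1 r k s))
        - ∑ s, (db r s * da1 s k i + b s * dda1 r s k i)))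
      + (∑ r, c1 r i * ((∑ s, a s * db1 s k r) + (∑ s, a1 s r * b1 k s)
        - (∑ s, b1 s r * a1 k s) - ∑ s, b s * da1 s k r))
      - (∑ s, ((∑ r, a r * db1 r s i) + (∑ r, a1 r i * b1 s r)
        - (∑ r, b1 r i * a1 s r) - ∑ r, b r * da1 r s i) * c1 k s)
      - ∑ s, ((∑ r, a r * db r s) - ∑ r, b r * da r s) * dc1 s k i) = 0 := by
  rw [hA4, hA4, hB4, hB2, hA4, hA4, hB4, hB2, hA4, hA4, hB4, hB2]
  simp only [← Finset.sum_sub_distrib, ← Finset.sum_add_distrib]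
  apply sum_antisymm
  intro r s
  simp only [sa1 s r, sb1 s r, sc1 s r]
  ring

/-- Example 5.1 / Corollary 5.11 at order one: the bracket on smooth
sections of `J₁(T)` over an open set `U ⊆ ℝⁿ` satisfies the Jacobi identity: the cyclic sum
`[(ξ,ξ₁),[(η,η₁),(ζ,ζ₁)]] + [(η,η₁),[(ζ,ζ₁),(ξ,ξ₁)]] + [(ζ,ζ₁),[(ξ,ξ₁),(η,η₁)]]` vanishes
identically on `U`, in both the vector-field components and the matrix components. -/
theorem jet_bracket_jacobi_identity {n : ℕ}
    (U : Set (Fin n → ℝ)) (hUopen : IsOpen U)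
    (ξ η ζ : (Fin n → ℝ) → Fin n → ℝ)
    (ξ₁ η₁ ζ₁ : (Fin n → ℝ) → Fin n → Fin n → ℝ)
    (hξ : ContDiffOn ℝ (⊤ : ℕ∞) ξ U) (hξ₁ : ContDiffOn ℝ (⊤ : ℕ∞) ξ₁ U)
    (hη : ContDiffOn ℝ (⊤ : ℕ∞) η U) (hη₁ : ContDiffOn ℝ (⊤ : ℕ∞) η₁ U)
    (hζ : ContDiffOn ℝ (⊤ : ℕ∞) ζ U) (hζ₁ : ContDiffOn ℝ (⊤ : ℕ∞) ζ₁ U) :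
    ∀ x ∈ U,
      (∀ k, brkVec ξ (brkVec η ζ) x k + brkVec η (brkVec ζ ξ) x k +
        brkVec ζ (brkVec ξ η) x k = 0) ∧
      (∀ k i, brkMat ξ (brkVec η ζ) ξ₁ (brkMat η ζ η₁ ζ₁) x k i +
        brkMat η (brkVec ζ ξ) η₁ (brkMat ζ ξ ζ₁ ξ₁) x k i +
        brkMat ζ (brkVec ξ η) ζ₁ (brkMat ξ η ξ₁ η₁) x k i = 0) := by
  intro x hx
  have hmem := hUopen.mem_nhds hx
  have cξ : ∀ m, ContDiffAt ℝ (⊤ : ℕ∞) (fun y => ξ y m) x :=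
    fun m => contDiffAt_pi.mp (hξ.contDiffAt hmem) m
  have cη : ∀ m, ContDiffAt ℝ (⊤ : ℕ∞) (fun y => η y m) x :=
    fun m => contDiffAt_pi.mp (hη.contDiffAt hmem) m
  have cζ : ∀ m, ContDiffAt ℝ (⊤ : ℕ∞) (fun y => ζ y m) x :=
    fun m => contDiffAt_pi.mp (hζ.contDiffAt hmem) m
  have cξ₁ : ∀ m j, ContDiffAt ℝ (⊤ : ℕ∞) (fun y => ξ₁ y m j) x :=
    fun m j => contDiffAt_pi.mp (contDiffAt_pi.mp (hξ₁.contDiffAt hmem) m) j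
  have cη₁ : ∀ m j, ContDiffAt ℝ (⊤ : ℕ∞) (fun y => η₁ y m j) x :=
    fun m j => contDiffAt_pi.mp (contDiffAt_pi.mp (hη₁.contDiffAt hmem) m) j
  have cζ₁ : ∀ m j, ContDiffAt ℝ (⊤ : ℕ∞) (fun y => ζ₁ y m j) x :=
    fun m j => contDiffAt_pi.mp (contDiffAt_pi.mp (hζ₁.contDiffAt hmem) m) j
  constructor
  · intro k
    simp only [brkVec]
    simp only [pd_brkVec' η ζ x cη cζ, pd_brkVec' ζ ξ x cζ cξ, pd_brkVec' ξ η x cξ cη]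
    exact jacobi_vec_alg k (ξ x) (η x) (ζ x)
      (fun r m => pd r (fun y => ξ y m) x)
      (fun r m => pd r (fun y => η y m) x)
      (fun r m => pd r (fun y => ζ y m) x)
      (fun r s m => pd r (fun y => pd s (fun y' => ξ y' m) y) x)
      (fun r s m => pd r (fun y => pd s (fun y' => η y' m) y) x)
      (fun r s m => pd r (fun y => pd s (fun y' => ζ y' m) y) x)
      (fun r s m => pd2_comm (cξ m) r s)
      (fun r s m => pd2_comm (cη m) r s)
      (fun r s m => pd2_comm (cζ m) r s)
  · intro k i
    simp only [brkMat, brkVec]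
    simp only [pd_brkMat' η ζ η₁ ζ₁ x cη cζ cη₁ cζ₁,
      pd_brkMat' ζ ξ ζ₁ ξ₁ x cζ cξ cζ₁ cξ₁,
      pd_brkMat' ξ η ξ₁ η₁ x cξ cη cξ₁ cη₁]
    exact jacobi_mat_alg k i (ξ x) (η x) (ζ x) (ξ₁ x) (η₁ x) (ζ₁ x)
      (fun r m => pd r (fun y => ξ y m) x)
      (fun r m => pd r (fun y => η y m) x)
      (fun r m => pd r (fun y => ζ y m) x)
      (fun r m j => pd r (fun y => ξ₁ y m j) x)
      (fun r m j => pd r (fun y => η₁ y m j) x)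
      (fun r m j => pd r (fun y => ζ₁ y m j) x)
      (fun r s m j => pd r (fun y => pd s (fun y' => ξ₁ y' m j) y) x)
      (fun r s m j => pd r (fun y => pd s (fun y' => η₁ y' m j) y) x)
      (fun r s m j => pd r (fun y => pd s (fun y' => ζ₁ y' m j) y) x)
      (fun r s m j => pd2_comm (cξ₁ m j) r s)
      (fun r s m j => pd2_comm (cη₁ m j) r s)
      (fun r s m j => pd2_comm (cζ₁ m j) r s)
end
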